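/- arXiv:1301.6364 — 13 statements merged into one kernel-verified Lean document; each statement's English description precedes it below -/
import Mathlib

section
/- For every S ≥ 1 and all u, v ∈ ℝ^S, one has ū − v̄ ≺_c u − v̄, where ū and v̄ denote the sorted versions of u and v respectively. -/
open Finset

/-- The nondecreasing rearrangement of a finite real vector. -/
noncomputable def sortVec {S : ℕ} (u : Fin S → ℝ) : Fin S → ℝ := u ∘ Tuple.sort u

/-- The Schur-convex semi-ordering `≺_c` : equal total sums, and each tail sum
(from the second coordinate on) of the sorted version of `u` is dominated by that of `v`. -/
def schurLE {S : ℕ} (u v : Fin S → ℝ) : Prop :=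
  (∑ i, u i = ∑ i, v i) ∧
  ∀ k : Fin S, 1 ≤ (k : ℕ) →
    ∑ i ∈ Finset.Ici k, sortVec u i ≤ ∑ i ∈ Finset.Ici k, sortVec v i

/-- The semi-ordering `≺_*` : every tail sum of `u` is dominated by that of `v`. -/
def starLE {S : ℕ} (u v : Fin S → ℝ) : Prop :=
  ∀ k : Fin S, ∑ i ∈ Finset.Ici k, u i ≤ ∑ i ∈ Finset.Ici k, v i

/-- The semi-ordering `≺_P` : `u ≺_* v` and `u(ℓ) ≤ v(ℓ)` for every `ℓ ≥ P`. -/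
def precP {S : ℕ} (P : Fin S) (u v : Fin S → ℝ) : Prop :=
  starLE u v ∧ ∀ ℓ : Fin S, P ≤ ℓ → u ℓ ≤ v ℓ

/-- The map `G̃^P : u ↦ sort([u + σ·e_P − ξ·1]⁺)`.  For `P` the first index,
this is the Kiefer–Wolfowitz map `G`. -/
noncomputable def GP {S : ℕ} (σ ξ : ℝ) (P : Fin S) (u : Fin S → ℝ) : Fin S → ℝ :=
  sortVec (fun i => max (u i + (if i = P then σ else 0) - ξ) 0)

/-!
For a nondecreasing vector `s` and any threshold `t`, the tail sum `∑_{i ≥ k} s i` is at most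
`#{i ≥ k} · t + ∑_i (s i - t)⁺`, with equality at `t = s k`; the right-hand side only depends on the
multiset of entries. Hence `w₁ ≺_c w₂` as soon as the sums agree and
`∑_i (w₁ i - t)⁺ ≤ ∑_i (w₂ i - t)⁺` for every `t`. For `w₁ = ū - v̄` and `w₂ = u - v̄` the latter is
the rearrangement inequality for the submodular cost `(a, c) ↦ (a - c - t)⁺`: pairing the entries of
`u` with those of the nondecreasing vector `v̄` is cheapest when `u` is nondecreasing too.
-/

theorem Fintype.sum_le_sum_of_le_on_pair {ι γ : Type*} [Fintype ι] [DecidableEq ι]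
    [AddCommMonoid γ] [PartialOrder γ] [IsOrderedAddMonoid γ] {g h : ι → γ} {a b : ι}
    (hab : a ≠ b) (hpair : g a + g b ≤ h a + h b) (hrest : ∀ i, i ≠ a → i ≠ b → g i = h i) :
    ∑ i, g i ≤ ∑ i, h i := by
  rw [← sum_add_sum_compl {a, b} g, ← sum_add_sum_compl {a, b} h, sum_pair hab, sum_pair hab]
  refine add_le_add hpair (Finset.sum_congr rfl fun i hi => ?_).le
  simp only [mem_compl, mem_insert, mem_singleton, not_or] at hi
  exact hrest i hi.1 hi.2

/-- The rearrangement inequality for a submodular cost `f`. -/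
theorem Monotone.sum_le_sum_comp_perm {ι α β γ : Type*} [LinearOrder ι] [Fintype ι]
    [Preorder α] [Preorder β] [AddCommMonoid γ] [PartialOrder γ] [IsOrderedAddMonoid γ]
    {f : α → β → γ} (hf : ∀ a b c d, a ≤ b → c ≤ d → f b d + f a c ≤ f a d + f b c)
    {x : ι → α} {y : ι → β} (hx : Monotone x) (hy : Monotone y) (σ : Equiv.Perm ι) :
    ∑ i, f (x i) (y i) ≤ ∑ i, f (x (σ i)) (y i) := by
  induction hn : σ.support.card using Nat.strong_induction_on generalizing σ with
  | _ n ih =>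
  rcases σ.support.eq_empty_or_nonempty with hσ | hσ
  · simp [Equiv.Perm.support_eq_empty_iff.mp hσ]
  -- Undo the displacement at the largest moved index `m`, which strictly shrinks the support.
  set m := σ.support.max' hσ
  have hm_mem : m ∈ σ.support := max'_mem _ hσ
  have hm : σ m ≠ m := Equiv.Perm.mem_support.mp hm_mem
  set k := σ.symm m
  have hkm : k ≠ m := fun h => hm (by rw [← h, Equiv.apply_symm_apply, h])
  have hσm_le : σ m ≤ m := le_max' _ _ (Equiv.Perm.apply_mem_support.mpr hm_mem)
  have hk_le : k ≤ m :=
    le_max' _ _ (Equiv.Perm.apply_mem_support.mp (by rwa [Equiv.apply_symm_apply]))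
  set τ : Equiv.Perm ι := σ.trans (Equiv.swap (σ m) m)
  have hτm : τ m = m := Equiv.swap_apply_left _ _
  have hτk : τ k = σ m := by simp [τ, k]
  have hτ : ∀ i, i ≠ m → i ≠ k → τ i = σ i := fun i him hik =>
    Equiv.swap_apply_of_ne_of_ne (σ.injective.ne him) (fun h => hik (by simp [k, ← h]))
  have hsupp : τ.support ⊆ σ.support.erase m := by
    intro i hi
    have him : i ≠ m := fun h => Equiv.Perm.mem_support.mp hi (h ▸ hτm)
    refine mem_erase.mpr ⟨him, Equiv.Perm.mem_support.mpr fun hσi => ?_⟩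
    have hik : i ≠ k := fun h => him (by rw [← hσi, h, Equiv.apply_symm_apply])
    exact Equiv.Perm.mem_support.mp hi ((hτ i him hik).trans hσi)
  have hlt : τ.support.card < n :=
    hn ▸ (card_le_card hsupp).trans_lt (card_erase_lt_of_mem hm_mem)
  refine (ih _ hlt τ rfl).trans (Fintype.sum_le_sum_of_le_on_pair hkm.symm ?_ fun i him hik => by
    rw [hτ i him hik])
  rw [hτm, hτk, show σ k = m from Equiv.apply_symm_apply σ m]
  exact hf _ _ _ _ (hx hσm_le) (hy hk_le)

theorem posPart_sub_add_posPart_sub_le {a b c d : ℝ} (hab : a ≤ b) (hcd : c ≤ d) :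
    (b - d)⁺ + (a - c)⁺ ≤ (a - d)⁺ + (b - c)⁺ := by
  simp only [posPart_def, max_def]
  split_ifs <;> linarith

section TailSum

variable {ι : Type*} [LinearOrder ι] [Fintype ι] [LocallyFiniteOrderTop ι]

theorem sum_Ici_le_card_mul_add_sum_posPart (s : ι → ℝ) (k : ι) (t : ℝ) :
    ∑ i ∈ Ici k, s i ≤ #(Ici k) * t + ∑ i, (s i - t)⁺ :=
  calc ∑ i ∈ Ici k, s i
      ≤ ∑ i ∈ Ici k, (t + (s i - t)⁺) := sum_le_sum fun i _ => by linarith [le_posPart (s i - t)]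
    _ = #(Ici k) * t + ∑ i ∈ Ici k, (s i - t)⁺ := by
        rw [sum_add_distrib, sum_const, nsmul_eq_mul]
    _ ≤ #(Ici k) * t + ∑ i, (s i - t)⁺ :=
        add_le_add_right (sum_le_univ_sum_of_nonneg fun i => posPart_nonneg (s i - t)) _

theorem Monotone.sum_Ici_eq_card_mul_add_sum_posPart {s : ι → ℝ} (hs : Monotone s) (k : ι) :
    ∑ i ∈ Ici k, s i = #(Ici k) * s k + ∑ i, (s i - s k)⁺ := by
  have htail : ∑ i, (s i - s k)⁺ = ∑ i ∈ Ici k, (s i - s k) := by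
    have hout : ∀ i ∉ Ici k, (s i - s k)⁺ = 0 := fun i hi =>
      posPart_eq_zero.mpr (sub_nonpos.mpr (hs (lt_of_not_ge (mt mem_Ici.mpr hi)).le))
    rw [← sum_subset (subset_univ (Ici k)) fun i _ hi => hout i hi]
    exact sum_congr rfl fun i hi => posPart_eq_self.mpr (sub_nonneg.mpr (hs (mem_Ici.mp hi)))
  rw [htail, sum_sub_distrib, sum_const, nsmul_eq_mul, add_sub_cancel]

end TailSum

theorem sum_comp_sortVec {S : ℕ} {M : Type*} [AddCommMonoid M] (w : Fin S → ℝ) (φ : ℝ → M) :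
    ∑ i, φ (sortVec w i) = ∑ i, φ (w i) :=
  Equiv.sum_comp (Tuple.sort w) (φ ∘ w)

theorem sum_Ici_sortVec_le_of_sum_posPart_le {S : ℕ} {w₁ w₂ : Fin S → ℝ}
    (h : ∀ t, ∑ i, (w₁ i - t)⁺ ≤ ∑ i, (w₂ i - t)⁺) (k : Fin S) :
    ∑ i ∈ Ici k, sortVec w₁ i ≤ ∑ i ∈ Ici k, sortVec w₂ i := by
  set t := sortVec w₂ k
  calc ∑ i ∈ Ici k, sortVec w₁ i
      ≤ #(Ici k) * t + ∑ i, (sortVec w₁ i - t)⁺ := sum_Ici_le_card_mul_add_sum_posPart _ k t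
    _ ≤ #(Ici k) * t + ∑ i, (sortVec w₂ i - t)⁺ := by
        rw [sum_comp_sortVec w₁ (fun r => (r - t)⁺), sum_comp_sortVec w₂ (fun r => (r - t)⁺)]
        exact add_le_add_right (h t) _
    _ = ∑ i ∈ Ici k, sortVec w₂ i :=
        ((Tuple.monotone_sort w₂).sum_Ici_eq_card_mul_add_sum_posPart k).symm

theorem sum_posPart_sortVec_sub_le {S : ℕ} (u v : Fin S → ℝ) (t : ℝ) :
    ∑ i, (sortVec u i - sortVec v i - t)⁺ ≤ ∑ i, (u i - sortVec v i - t)⁺ := by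
  have h := (Tuple.monotone_sort u).sum_le_sum_comp_perm (f := fun a c => (a - c - t)⁺)
    (fun a b c d hab hcd => by
      simpa only [sub_sub] using posPart_sub_add_posPart_sub_le hab (by linarith : c + t ≤ d + t))
    (Tuple.monotone_sort v) (Tuple.sort u).symm
  simpa only [sortVec, Function.comp_apply, Equiv.apply_symm_apply] using h

theorem schurLE_sortVec_sub_general {S : ℕ} (u v : Fin S → ℝ) :
    schurLE (fun i => sortVec u i - sortVec v i) (fun i => u i - sortVec v i) := by
  refine ⟨?_, fun k _ => sum_Ici_sortVec_le_of_sum_posPart_le (sum_posPart_sortVec_sub_le u v) k⟩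
  rw [sum_sub_distrib, sum_sub_distrib]
  exact congrArg (· - ∑ i, sortVec v i) (sum_comp_sortVec u id)

/-- `ū − v̄ ≺_c u − v̄`. -/
theorem schurLE_sortVec_sub {S : ℕ} (hS : 1 ≤ S) (u v : Fin S → ℝ) :
    schurLE (fun i => sortVec u i - sortVec v i) (fun i => u i - sortVec v i) :=
  schurLE_sortVec_sub_general u v
end

section
/- Let S ≥ 1 and let u, v ∈ (ℝ⁺)^S be nondecreasingly sorted vectors such that u ≺_* v. Then for every real number x, [u − x·1]⁺ ≺_* [v − x·1]⁺, where 1 is the all-ones vector and [·]⁺ denotes the coordinatewise positive part. -/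
open Finset

theorem Finset.eq_empty_or_eq_Ici_of_isUpperSet {α : Type*} [LinearOrder α] [WellFoundedLT α]
    [LocallyFiniteOrderTop α] {U : Finset α} (hU : IsUpperSet (U : Set α)) :
    U = ∅ ∨ ∃ a, U = Finset.Ici a := by
  rcases hU.eq_empty_or_Ici with hempty | ⟨a, hIci⟩
  · exact .inl (Finset.coe_eq_empty.mp hempty)
  · exact .inr ⟨a, Finset.coe_injective (by rw [hIci, Finset.coe_Ici])⟩

theorem Finset.sum_max_zero_eq_sum_filter_pos {ι M : Type*} [AddCommMonoid M] [LinearOrder M]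
    (s : Finset ι) (f : ι → M) :
    ∑ i ∈ s, max (f i) 0 = ∑ i ∈ s.filter (fun i => 0 < f i), f i := by
  rw [Finset.sum_filter]
  refine Finset.sum_congr rfl fun i _ => ?_
  split_ifs with hpos
  · exact max_eq_left hpos.le
  · exact max_eq_right (not_lt.mp hpos)

theorem starLE.sum_le_sum_of_isUpperSet {S : ℕ} {u v : Fin S → ℝ} (huv : starLE u v)
    {U : Finset (Fin S)} (hU : IsUpperSet (U : Set (Fin S))) :
    ∑ i ∈ U, u i ≤ ∑ i ∈ U, v i := by
  rcases Finset.eq_empty_or_eq_Ici_of_isUpperSet hU with rfl | ⟨k, rfl⟩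
  · simp
  · exact huv k

/-- For monotone `u`, the support of `[u - x·1]⁺` within a tail is again an upper set, on which
the positive part can be dropped; on `v`'s side dropping it and enlarging the set only increase
the sum. -/
theorem starLE_pos_part_sub_const_general {S : ℕ} (u v : Fin S → ℝ)
    (hu : Monotone u)
    (huv : starLE u v) (x : ℝ) :
    starLE (fun i => max (u i - x) 0) (fun i => max (v i - x) 0) := by
  intro k
  set U := (Finset.Ici k).filter (fun i => 0 < u i - x)
  have hU : IsUpperSet (U : Set (Fin S)) := fun i j hij hi => by
    simp only [U, Finset.coe_filter, Finset.mem_Ici, Set.mem_ofPred_eq] at hi ⊢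
    exact ⟨hi.1.trans hij, hi.2.trans_le (sub_le_sub_right (hu hij) x)⟩
  calc ∑ i ∈ Finset.Ici k, max (u i - x) 0
      = ∑ i ∈ U, (u i - x) := Finset.sum_max_zero_eq_sum_filter_pos _ _
    _ ≤ ∑ i ∈ U, (v i - x) := by
        simp only [Finset.sum_sub_distrib]
        exact sub_le_sub_right (huv.sum_le_sum_of_isUpperSet hU) _
    _ ≤ ∑ i ∈ U, max (v i - x) 0 := Finset.sum_le_sum fun i _ => le_max_left _ _
    _ ≤ ∑ i ∈ Finset.Ici k, max (v i - x) 0 :=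
        Finset.sum_le_sum_of_subset_of_nonneg (Finset.filter_subset _ _)
          fun i _ _ => le_max_right _ _

/-- if `u ≺_* v` (sorted, nonnegative) then `[u − x·1]⁺ ≺_* [v − x·1]⁺`. -/
theorem starLE_pos_part_sub_const {S : ℕ} (hS : 1 ≤ S) (u v : Fin S → ℝ)
    (hu : Monotone u) (hv : Monotone v)
    (hu0 : ∀ i, 0 ≤ u i) (hv0 : ∀ i, 0 ≤ v i)
    (huv : starLE u v) (x : ℝ) :
    starLE (fun i => max (u i - x) 0) (fun i => max (v i - x) 0) :=
  starLE_pos_part_sub_const_general u v hu huv x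
end

section
/- Let S ≥ 1 and let u, v ∈ (ℝ⁺)^S be nondecreasingly sorted vectors such that u ≺_* v. Then for every index j ∈ {1,...,S} with u(j) ≤ v(j) and every real number y ≥ 0, sort(u + y·e_j) ≺_* sort(v + y·e_j). -/
open Finset

lemma sum_le_sum_upclosed {S : ℕ} (w : Fin S → ℝ) (hw : Monotone w) (h0 : ∀ i, 0 ≤ w i)
    (A B : Finset (Fin S)) (hcard : A.card ≤ B.card)
    (hB : ∀ i ∈ B, ∀ j, i ≤ j → j ∈ B) :
    ∑ i ∈ A, w i ≤ ∑ i ∈ B, w i := by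
  have hA : ∑ i ∈ A ∩ B, w i + ∑ i ∈ A \ B, w i = ∑ i ∈ A, w i :=
    Finset.sum_inter_add_sum_sdiff A B w
  have hBs : ∑ i ∈ B ∩ A, w i + ∑ i ∈ B \ A, w i = ∑ i ∈ B, w i :=
    Finset.sum_inter_add_sum_sdiff B A w
  rw [Finset.inter_comm] at hA
  have key : ∑ i ∈ A \ B, w i ≤ ∑ i ∈ B \ A, w i := by
    rcases Finset.eq_empty_or_nonempty (A \ B) with h | hne
    · rw [h, Finset.sum_empty]
      exact Finset.sum_nonneg fun i _ => h0 i
    · have hc1 : (A \ B).card + (A ∩ B).card = A.card := Finset.card_sdiff_add_card_inter A B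
      have hc2 : (B \ A).card + (B ∩ A).card = B.card := Finset.card_sdiff_add_card_inter B A
      rw [Finset.inter_comm B A] at hc2
      have hcc : (A \ B).card ≤ (B \ A).card := by omega
      have hneB : (B \ A).Nonempty := by
        rw [← Finset.card_pos]
        calc 0 < (A \ B).card := Finset.card_pos.mpr hne
        _ ≤ _ := hcc
      set b0 := (B \ A).min' hneB with hb0
      have hb0B : b0 ∈ B \ A := Finset.min'_mem _ _
      have hle : ∀ a ∈ A \ B, w a ≤ w b0 := by
        intro a ha
        apply hw
        by_contra hab
        push_neg at hab
        exact (Finset.mem_sdiff.mp ha).2 (hB b0 (Finset.mem_sdiff.mp hb0B).1 a hab.le)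
      calc ∑ i ∈ A \ B, w i ≤ (A \ B).card • w b0 := Finset.sum_le_card_nsmul _ _ _ hle
        _ ≤ (B \ A).card • w b0 := by
            have := h0 b0
            simp only [nsmul_eq_mul]
            apply mul_le_mul_of_nonneg_right _ this
            exact_mod_cast hcc
        _ ≤ ∑ i ∈ B \ A, w i := Finset.card_nsmul_le_sum _ _ _
            (fun b hb => hw (Finset.min'_le _ _ hb))
  linarith

lemma sortVec_reindex {S : ℕ} (x : Fin S → ℝ) (T : Finset (Fin S)) :
    ∑ i ∈ T, sortVec x i = ∑ i ∈ T.image (Tuple.sort x), x i := by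
  rw [Finset.sum_image (fun a _ b _ h => (Tuple.sort x).injective h)]
  rfl

lemma sum_le_tail_sort {S : ℕ} (x : Fin S → ℝ) (h0 : ∀ i, 0 ≤ x i) (k : Fin S)
    (B : Finset (Fin S)) (hcard : B.card ≤ (Finset.Ici k).card) :
    ∑ i ∈ B, x i ≤ ∑ i ∈ Finset.Ici k, sortVec x i := by
  set σ := Tuple.sort x
  have h1 : ∑ i ∈ B.image σ.symm, sortVec x i = ∑ i ∈ B, x i := by
    rw [Finset.sum_image (fun a _ b _ h => σ.symm.injective h)]
    apply Finset.sum_congr rfl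
    intro i _
    show x (σ (σ.symm i)) = x i
    rw [Equiv.apply_symm_apply]
  rw [← h1]
  apply sum_le_sum_upclosed (sortVec x) (Tuple.monotone_sort x) (fun i => h0 _)
  · rw [Finset.card_image_of_injective _ σ.symm.injective]; exact hcard
  · intro i hi j hij
    exact Finset.mem_Ici.mpr (le_trans (Finset.mem_Ici.mp hi) hij)

lemma sum_ite_add' {S : ℕ} (x : Fin S → ℝ) (j : Fin S) (y : ℝ) (A : Finset (Fin S)) :
    ∑ i ∈ A, (x i + (if i = j then y else 0)) = (∑ i ∈ A, x i) + (if j ∈ A then y else 0) := by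
  rw [Finset.sum_add_distrib, Finset.sum_ite_eq' A j (fun _ => y)]

/-- if `u ≺_* v` (sorted, nonnegative), `u(j) ≤ v(j)` and `y ≥ 0`, then
`sort(u + y·e_j) ≺_* sort(v + y·e_j)`. -/
theorem starLE_sortVec_add_single {S : ℕ} (hS : 1 ≤ S) (u v : Fin S → ℝ)
    (hu : Monotone u) (hv : Monotone v)
    (hu0 : ∀ i, 0 ≤ u i) (hv0 : ∀ i, 0 ≤ v i)
    (huv : starLE u v)
    (j : Fin S) (hj : u j ≤ v j) (y : ℝ) (hy : 0 ≤ y) :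
    starLE (sortVec (fun i => u i + (if i = j then y else 0)))
           (sortVec (fun i => v i + (if i = j then y else 0))) := by
  intro k
  set u' : Fin S → ℝ := fun i => u i + (if i = j then y else 0) with hu'
  set v' : Fin S → ℝ := fun i => v i + (if i = j then y else 0) with hv'
  have hv'0 : ∀ i, 0 ≤ v' i := by
    intro i
    show 0 ≤ v i + (if i = j then y else 0)
    have := hv0 i
    have : (0:ℝ) ≤ if i = j then y else 0 := by positivity
    linarith [hv0 i]
  have hIciUp : ∀ i ∈ Finset.Ici k, ∀ l, i ≤ l → l ∈ Finset.Ici k := by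
    intro i hi l hil; exact Finset.mem_Ici.mpr (le_trans (Finset.mem_Ici.mp hi) hil)
  have hIoiUp : ∀ i ∈ Finset.Ioi k, ∀ l, i ≤ l → l ∈ Finset.Ioi k := by
    intro i hi l hil; exact Finset.mem_Ioi.mpr (lt_of_lt_of_le (Finset.mem_Ioi.mp hi) hil)
  -- tail sums over Ioi
  have hIoi : ∑ i ∈ Finset.Ioi k, u i ≤ ∑ i ∈ Finset.Ioi k, v i := by
    by_cases h : (k : ℕ) + 1 < S
    · have hIoiIci : Finset.Ioi k = Finset.Ici (⟨(k : ℕ) + 1, h⟩ : Fin S) := by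
        ext i
        simp only [Finset.mem_Ioi, Finset.mem_Ici, Fin.lt_def, Fin.le_def]
        omega
      rw [hIoiIci]; exact huv _
    · have : Finset.Ioi k = ∅ := by
        ext i
        simp only [Finset.mem_Ioi, Finset.notMem_empty, iff_false, not_lt]
        exact Fin.le_def.mpr (by omega)
      simp [this]
  have hIciIoi : Finset.Ici k = insert k (Finset.Ioi k) := by
    ext i
    simp [Finset.mem_Ici, Finset.mem_Ioi, le_iff_lt_or_eq, or_comm, eq_comm]
  have hcardIci : (Finset.Ici k).card = (Finset.Ioi k).card + 1 := by
    rw [hIciIoi, Finset.card_insert_of_notMem (by simp)]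
  -- express the left tail sum as a sum of u' over a set A
  set A : Finset (Fin S) := (Finset.Ici k).image (Tuple.sort u') with hA
  have hAcard : A.card = (Finset.Ici k).card :=
    Finset.card_image_of_injective _ (Tuple.sort u').injective
  have hleft : ∑ i ∈ Finset.Ici k, sortVec u' i = ∑ i ∈ A, u' i := sortVec_reindex u' _
  rw [hleft]
  by_cases hjA : j ∈ A
  · rw [sum_ite_add' u j y A, if_pos hjA]
    by_cases hjk : k ≤ j
    · -- B = Ici k
      have h1 : ∑ i ∈ A, u i ≤ ∑ i ∈ Finset.Ici k, u i :=
        sum_le_sum_upclosed u hu hu0 A _ hAcard.le hIciUp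
      have h2 : ∑ i ∈ Finset.Ici k, v' i = (∑ i ∈ Finset.Ici k, v i) + y := by
        rw [sum_ite_add' v j y, if_pos (Finset.mem_Ici.mpr hjk)]
      have h3 : ∑ i ∈ Finset.Ici k, v' i ≤ ∑ i ∈ Finset.Ici k, sortVec v' i :=
        sum_le_tail_sort v' hv'0 k _ le_rfl
      have h4 := huv k
      linarith
    · -- j < k, B = insert j (Ioi k)
      push_neg at hjk
      have hjIoi : j ∉ Finset.Ioi k := fun h => lt_asymm hjk (Finset.mem_Ioi.mp h)
      have hAj : ∑ i ∈ A, u i = u j + ∑ i ∈ A.erase j, u i :=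
        (Finset.add_sum_erase A u hjA).symm
      have h1 : ∑ i ∈ A.erase j, u i ≤ ∑ i ∈ Finset.Ioi k, u i := by
        apply sum_le_sum_upclosed u hu hu0 _ _ _ hIoiUp
        rw [Finset.card_erase_of_mem hjA, hAcard, hcardIci]
        omega
      have hB : ∑ i ∈ insert j (Finset.Ioi k), v' i
          = v j + y + ∑ i ∈ Finset.Ioi k, v i := by
        rw [Finset.sum_insert hjIoi, sum_ite_add' v j y, if_neg hjIoi]
        show v j + (if j = j then y else 0) + _ = _
        rw [if_pos rfl]
        ring
      have h3 : ∑ i ∈ insert j (Finset.Ioi k), v' i ≤ ∑ i ∈ Finset.Ici k, sortVec v' i := by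
        apply sum_le_tail_sort v' hv'0 k
        rw [Finset.card_insert_of_notMem hjIoi, hcardIci]
      linarith
  · rw [sum_ite_add' u j y A, if_neg hjA]
    have h1 : ∑ i ∈ A, u i ≤ ∑ i ∈ Finset.Ici k, u i :=
      sum_le_sum_upclosed u hu hu0 A _ hAcard.le hIciUp
    have h2 : ∑ i ∈ Finset.Ici k, v i ≤ ∑ i ∈ Finset.Ici k, v' i := by
      apply Finset.sum_le_sum
      intro i _
      show v i ≤ v i + (if i = j then y else 0)
      have : (0:ℝ) ≤ if i = j then y else 0 := by positivity
      linarith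
    have h3 : ∑ i ∈ Finset.Ici k, v' i ≤ ∑ i ∈ Finset.Ici k, sortVec v' i :=
      sum_le_tail_sort v' hv'0 k _ le_rfl
    have h4 := huv k
    simp only [add_zero]
    linarith
end

section
/- Let S ≥ 1, P ∈ {1,...,S}, and let σ ≥ 0 and ξ ≥ 0 be real numbers. Let u, v ∈ (ℝ⁺)^S be nondecreasingly sorted vectors such that u ≺_P v. Then G(u) ≺_P G̃^P(v), where G(u) = sort([u + σ·e₁ − ξ·1]⁺) and G̃^P(v) = sort([v + σ·e_P − ξ·1]⁺). -/
/-!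
Write `a = [u - ξ]⁺` and `c = [v - ξ]⁺`. Then `G(u) = sort(a + δ_u e₁)` and
`G̃^P(v) = sort(c + δ_v e_P)`, where the gain `δ_x = [x + σ - ξ]⁺ - [x - ξ]⁺` of boosting a
coordinate `x` by `σ` is nonnegative and nondecreasing in `x`; since `u(1) ≤ u(P) ≤ v(P)`, this
gives `δ_u ≤ δ_v`. Truncation at `ξ` preserves `a ≺_P c` because `u` is sorted.

A tail sum of a sorted vector is the largest sum over that many coordinates, so the tail
inequalities come down to matching every set of coordinates of `a + δ_u e₁` with an equally large
set of coordinates of `c + δ_v e_P` carrying a larger sum. The coordinatewise inequalities for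
`ℓ ≥ P` follow by counting the coordinates of `a + δ_u e₁` that lie below the `ℓ`-th order
statistic of `c + δ_v e_P`.
-/

open Finset

theorem Monotone.sum_le_sum_of_card_eq {ι G : Type*} [LinearOrder ι] [AddCommGroup G]
    [PartialOrder G] [IsOrderedAddMonoid G] {g : ι → G} (hg : Monotone g) {C D : Finset ι}
    (hcard : #C = #D) (hD : ∀ j ∉ D, ∀ i ∈ D, j ≤ i) :
    ∑ i ∈ C, g i ≤ ∑ i ∈ D, g i := by
  rw [← sub_nonpos, ← sum_sdiff_sub_sum_sdiff, sub_nonpos]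
  rcases (D \ C).eq_empty_or_nonempty with hDC | hDC
  · have hCD : C \ D = ∅ := card_eq_zero.1 (by rw [card_sdiff_comm hcard, hDC, card_empty])
    simp [hCD, hDC]
  · set m := (D \ C).min' hDC
    have hm : m ∈ D \ C := min'_mem _ hDC
    calc ∑ i ∈ C \ D, g i ≤ #(C \ D) • g m :=
          sum_le_card_nsmul _ _ _ fun j hj =>
            hg (hD j (mem_sdiff.1 hj).2 m (mem_sdiff.1 hm).1)
      _ = #(D \ C) • g m := by rw [card_sdiff_comm hcard]
      _ ≤ ∑ i ∈ D \ C, g i := card_nsmul_le_sum _ _ _ fun i hi => hg (min'_le _ _ hi)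

theorem Fin.exists_gt_of_lt_card_filter {S : ℕ} {p : Fin S → Prop} [DecidablePred p]
    {P ℓ : Fin S} (hPℓ : P ≤ ℓ) (hP : ¬p P) (h : (ℓ : ℕ) < #{i | p i}) : ∃ i, p i ∧ ℓ < i := by
  by_contra! hle
  have : #{i | p i} ≤ #((Iic ℓ).erase P) := card_le_card fun i hi => by
    simp only [mem_filter, mem_univ, true_and] at hi
    exact mem_erase.2 ⟨fun hiP => hP (hiP ▸ hi), mem_Iic.2 (hle i hi)⟩
  rw [card_erase_of_mem (mem_Iic.2 hPℓ), Fin.card_Iic] at this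
  omega

theorem le_of_notMem_Ici_of_mem_Ici {α : Type*} [LinearOrder α] [LocallyFiniteOrderTop α]
    {k j i : α} (hj : j ∉ Ici k) (hi : i ∈ Ici k) : j ≤ i :=
  (lt_of_not_ge (mt mem_Ici.2 hj)).le.trans (mem_Ici.1 hi)

section sortVec

variable {S : ℕ}

theorem sortVec_eq_self {f : Fin S → ℝ} (hf : Monotone f) : sortVec f = f := by
  simp [sortVec, Tuple.sort_eq_refl_iff_monotone.2 hf]

theorem card_filter_sortVec_le (f : Fin S → ℝ) (t : ℝ) :
    #{i | sortVec f i ≤ t} = #{i | f i ≤ t} :=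
  card_equiv (Tuple.sort f) fun i => by simp only [mem_filter, mem_univ, true_and]; rfl

theorem Monotone.apply_le_iff_lt_card_filter {α : Type*} [LinearOrder α] {g : Fin S → α}
    (hg : Monotone g) (ℓ : Fin S) (t : α) : g ℓ ≤ t ↔ (ℓ : ℕ) < #{i | g i ≤ t} := by
  constructor
  · intro h
    calc (ℓ : ℕ) < #(Iic ℓ) := by simp
      _ ≤ #{i | g i ≤ t} := card_le_card fun i hi => by
          simpa using (hg (mem_Iic.1 hi)).trans h
  · intro h
    by_contra! hlt
    have : #{i | g i ≤ t} ≤ #(Iio ℓ) := card_le_card fun i hi => by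
      simp only [mem_filter, mem_univ, true_and] at hi
      exact mem_Iio.2 (lt_of_not_ge fun hle => (hlt.trans_le (hg hle)).not_ge hi)
    simp at this
    omega

theorem sortVec_le_iff_lt_card_filter (f : Fin S → ℝ) (ℓ : Fin S) (t : ℝ) :
    sortVec f ℓ ≤ t ↔ (ℓ : ℕ) < #{i | f i ≤ t} := by
  rw [← card_filter_sortVec_le]
  exact (Tuple.monotone_sort f).apply_le_iff_lt_card_filter ℓ t

theorem sortVec_le_sortVec {f g : Fin S → ℝ} (h : ∀ i, f i ≤ g i) (ℓ : Fin S) :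
    sortVec f ℓ ≤ sortVec g ℓ := by
  rw [sortVec_le_iff_lt_card_filter]
  exact ((sortVec_le_iff_lt_card_filter g ℓ _).1 le_rfl).trans_le <|
    card_le_card <| monotone_filter_right _ fun i _ hi => (h i).trans hi

theorem sum_le_sum_Ici_sortVec (f : Fin S → ℝ) (k : Fin S) {B : Finset (Fin S)}
    (hB : #B = #(Ici k)) : ∑ i ∈ B, f i ≤ ∑ i ∈ Ici k, sortVec f i := by
  have hB' : ∑ i ∈ B, f i = ∑ i ∈ B.map (Tuple.sort f).symm.toEmbedding, sortVec f i := by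
    simp [sortVec]
  rw [hB']
  exact (Tuple.monotone_sort f).sum_le_sum_of_card_eq (by simpa using hB)
    fun j hj i hi => le_of_notMem_Ici_of_mem_Ici hj hi

theorem sum_Ici_sortVec_le_of_forall_exists {f g : Fin S → ℝ} (k : Fin S)
    (h : ∀ A : Finset (Fin S), #A = #(Ici k) →
      ∃ B : Finset (Fin S), #B = #(Ici k) ∧ ∑ i ∈ A, f i ≤ ∑ i ∈ B, g i) :
    ∑ i ∈ Ici k, sortVec f i ≤ ∑ i ∈ Ici k, sortVec g i := by
  obtain ⟨B, hB, hAB⟩ := h ((Ici k).map (Tuple.sort f).toEmbedding) (card_map _)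
  calc ∑ i ∈ Ici k, sortVec f i = ∑ i ∈ (Ici k).map (Tuple.sort f).toEmbedding, f i := by
        simp [sortVec]
    _ ≤ ∑ i ∈ B, g i := hAB
    _ ≤ ∑ i ∈ Ici k, sortVec g i := sum_le_sum_Ici_sortVec g k hB

end sortVec

section positivePart

variable {S : ℕ}

theorem starLE_max_sub_zero {u v : Fin S → ℝ} (hu : Monotone u) (huv : starLE u v) (ξ : ℝ) :
    starLE (fun i => max (u i - ξ) 0) (fun i => max (v i - ξ) 0) := by
  intro k
  set T := (Ici k).filter fun i => ξ ≤ u i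
  have hT : ∑ i ∈ Ici k, max (u i - ξ) 0 = ∑ i ∈ T, (u i - ξ) := by
    rw [sum_filter]
    refine sum_congr rfl fun i _ => ?_
    split_ifs with h
    · exact max_eq_left (sub_nonneg.2 h)
    · exact max_eq_right (by linarith [lt_of_not_ge h])
  rw [hT]
  rcases T.eq_empty_or_nonempty with hempty | hne
  · rw [hempty, sum_empty]
    exact sum_nonneg fun i _ => le_max_right _ _
  · set j := T.min' hne
    have hj : k ≤ j ∧ ξ ≤ u j := by
      simpa only [T, mem_filter, mem_Ici] using T.min'_mem hne
    -- `u` is monotone, so the coordinates of the tail where `u ≥ ξ` form a tail themselves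
    have hTj : T = Ici j := by
      ext i
      refine ⟨fun hi => mem_Ici.2 (T.min'_le i hi), fun hi => ?_⟩
      simp only [T, mem_filter, mem_Ici] at hi ⊢
      exact ⟨hj.1.trans hi, hj.2.trans (hu hi)⟩
    calc ∑ i ∈ T, (u i - ξ) ≤ ∑ i ∈ Ici j, (v i - ξ) := by
          rw [hTj, sum_sub_distrib, sum_sub_distrib]
          exact sub_le_sub_right (huv j) _
      _ ≤ ∑ i ∈ Ici j, max (v i - ξ) 0 := sum_le_sum fun i _ => le_max_left _ _
      _ ≤ ∑ i ∈ Ici k, max (v i - ξ) 0 :=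
          sum_le_sum_of_subset_of_nonneg (Ici_subset_Ici.2 hj.1) fun i _ _ => le_max_right _ _

theorem precP_max_sub_zero {P : Fin S} {u v : Fin S → ℝ} (hu : Monotone u) (huv : precP P u v)
    (ξ : ℝ) : precP P (fun i => max (u i - ξ) 0) (fun i => max (v i - ξ) 0) :=
  ⟨starLE_max_sub_zero hu huv.1 ξ, fun ℓ hℓ => max_le_max (by linarith [huv.2 ℓ hℓ]) le_rfl⟩

end positivePart

def boostGain (σ ξ x : ℝ) : ℝ := max (x + σ - ξ) 0 - max (x - ξ) 0

theorem boostGain_nonneg {σ : ℝ} (hσ : 0 ≤ σ) (ξ x : ℝ) : 0 ≤ boostGain σ ξ x := by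
  unfold boostGain
  simp only [max_def]
  split_ifs <;> linarith

theorem boostGain_mono {σ : ℝ} (hσ : 0 ≤ σ) (ξ : ℝ) : Monotone (boostGain σ ξ) := by
  intro x y hxy
  unfold boostGain
  simp only [max_def]
  split_ifs <;> linarith

theorem GP_eq_sortVec_add_single {S : ℕ} (σ ξ : ℝ) (P : Fin S) (u : Fin S → ℝ) :
    GP σ ξ P u = sortVec ((fun i => max (u i - ξ) 0) + Pi.single P (boostGain σ ξ (u P))) := by
  unfold GP boostGain
  congr 1
  ext i
  by_cases h : i = P
  · subst h; simp
  · simp [h]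

section boost

variable {S : ℕ} {z P : Fin S} {a c : Fin S → ℝ} {δu δv : ℝ}

theorem starLE_sortVec_add_single_s6 (hz : IsBot z) (ha : Monotone a) (hac : precP P a c)
    (hδu : 0 ≤ δu) (hδ : δu ≤ δv) :
    starLE (sortVec (a + Pi.single z δu)) (sortVec (c + Pi.single P δv)) := by
  obtain ⟨hstar, hpt⟩ := hac
  intro k
  refine sum_Ici_sortVec_le_of_forall_exists k fun A hA => ?_
  simp only [Pi.add_apply, sum_add_distrib, sum_pi_single']
  have hAa : ∑ i ∈ A, a i ≤ ∑ i ∈ Ici k, a i :=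
    ha.sum_le_sum_of_card_eq hA fun j hj i hi => le_of_notMem_Ici_of_mem_Ici hj hi
  have hk := hstar k
  by_cases hkP : k ≤ P
  · refine ⟨Ici k, rfl, ?_⟩
    rw [if_pos (mem_Ici.2 hkP)]
    split_ifs <;> linarith
  by_cases hzA : z ∈ A
  · -- the boosted coordinate `z` lies in `A`; it is matched with the boosted coordinate `P`
    -- of `c`, and the rest of `A` with the tail `Ioi k`, where `a ≤ c` pointwise
    have hPk : P ∉ Ioi k := fun h => hkP (mem_Ioi.1 h).le
    refine ⟨insert P (Ioi k), ?_, ?_⟩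
    · rw [card_insert_of_notMem hPk, Fin.card_Ioi, Fin.card_Ici]
      omega
    rw [if_pos hzA, if_pos (mem_insert_self _ _), ← add_sum_erase A a hzA, sum_insert hPk]
    have hAz : #(A.erase z) = #(Ioi k) := by
      rw [card_erase_of_mem hzA, hA, Fin.card_Ioi, Fin.card_Ici]
      omega
    have h₁ : ∑ i ∈ A.erase z, a i ≤ ∑ i ∈ Ioi k, a i :=
      ha.sum_le_sum_of_card_eq hAz fun j hj i hi =>
        (not_lt.1 (mt mem_Ioi.2 hj)).trans (mem_Ioi.1 hi).le
    have h₂ : ∑ i ∈ Ioi k, a i ≤ ∑ i ∈ Ioi k, c i :=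
      sum_le_sum fun i hi => hpt i (lt_of_not_ge hkP |>.trans (mem_Ioi.1 hi)).le
    have h₃ : a z ≤ c P := (ha (hz P)).trans (hpt P le_rfl)
    linarith
  · refine ⟨Ici k, rfl, ?_⟩
    rw [if_neg hzA]
    split_ifs <;> linarith

theorem sortVec_add_single_le (hz : IsBot z) (ha : Monotone a) (hc : Monotone c)
    (hpt : ∀ ℓ, P ≤ ℓ → a ℓ ≤ c ℓ) (hδv : 0 ≤ δv) (hδ : δu ≤ δv) {ℓ : Fin S} (hℓ : P ≤ ℓ) :
    sortVec (a + Pi.single z δu) ℓ ≤ sortVec (c + Pi.single P δv) ℓ := by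
  set f := a + Pi.single z δu
  set g := c + Pi.single P δv
  set t := sortVec g ℓ
  have hf : ∀ i, i ≠ z → f i = a i := fun i hi => by simp [f, hi]
  have hg : ∀ i, i ≠ P → g i = c i := fun i hi => by simp [g, hi]
  have hfz : f z ≤ g P := by
    simpa [f, g] using add_le_add ((ha (hz P)).trans (hpt P le_rfl)) hδ
  have hcg : ∀ i, c i ≤ g i := fun i =>
    le_add_of_nonneg_right (by by_cases h : i = P <;> simp [h, hδv])
  have hct : c ℓ ≤ t := by
    simpa only [sortVec_eq_self hc] using sortVec_le_sortVec hcg ℓ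
  have hlow : ∀ i ≤ ℓ, i ≠ z → f i ≤ t := fun i hi hiz =>
    (hf i hiz).trans_le <| (ha hi).trans <| (hpt ℓ hℓ).trans hct
  have hgt : (ℓ : ℕ) < #{i | g i ≤ t} := (sortVec_le_iff_lt_card_filter g ℓ t).1 le_rfl
  rw [sortVec_le_iff_lt_card_filter]
  by_cases hzt : f z ≤ t
  · calc (ℓ : ℕ) < #(Iic ℓ) := by simp
      _ ≤ #{i | f i ≤ t} := card_le_card fun i hi => by
          rw [mem_filter]
          refine ⟨mem_univ _, ?_⟩
          by_cases hiz : i = z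
          · exact hiz ▸ hzt
          · exact hlow i (mem_Iic.1 hi) hiz
  -- otherwise `g P > t`, so counting forces some `i₀ > ℓ` with `g i₀ ≤ t`, and it replaces `z`
  obtain ⟨i₀, hi₀, hℓi₀⟩ := Fin.exists_gt_of_lt_card_filter hℓ (fun hP => hzt (hfz.trans hP)) hgt
  have hi₀z : i₀ ∉ (Iic ℓ).erase z := fun h => (mem_Iic.1 (mem_of_mem_erase h)).not_gt hℓi₀
  calc (ℓ : ℕ) < #(insert i₀ ((Iic ℓ).erase z)) := by
        rw [card_insert_of_notMem hi₀z, card_erase_of_mem (mem_Iic.2 (hz ℓ)), Fin.card_Iic]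
        omega
    _ ≤ #{i | f i ≤ t} := card_le_card fun i hi => by
        rw [mem_filter]
        refine ⟨mem_univ _, ?_⟩
        rcases mem_insert.1 hi with rfl | hi
        · have hPi : P < i := hℓ.trans_lt hℓi₀
          rw [hf i ((hz P).trans_lt hPi).ne']
          exact (hpt i hPi.le).trans ((hg i hPi.ne').symm.trans_le hi₀)
        · exact hlow i (mem_Iic.1 (mem_of_mem_erase hi)) (ne_of_mem_erase hi)

theorem precP_sortVec_add_single (hz : IsBot z) (ha : Monotone a) (hc : Monotone c)
    (hac : precP P a c) (hδu : 0 ≤ δu) (hδ : δu ≤ δv) :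
    precP P (sortVec (a + Pi.single z δu)) (sortVec (c + Pi.single P δv)) :=
  ⟨starLE_sortVec_add_single_s6 hz ha hac hδu hδ,
    fun _ hℓ => sortVec_add_single_le hz ha hc hac.2 (hδu.trans hδ) hδ hℓ⟩

end boost

theorem precP_G_GP_general {S : ℕ} (hS : 0 < S) (P : Fin S) (σ ξ : ℝ)
    (hσ : 0 ≤ σ)
    (u v : Fin S → ℝ)
    (hu : Monotone u) (hv : Monotone v)
    (huv : precP P u v) :
    precP P (GP σ ξ ⟨0, hS⟩ u) (GP σ ξ P v) := by
  have hz : IsBot (⟨0, hS⟩ : Fin S) := fun i => Nat.zero_le i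
  have hmono : ∀ {w : Fin S → ℝ}, Monotone w → Monotone fun i => max (w i - ξ) 0 :=
    fun hw i j hij => max_le_max (sub_le_sub_right (hw hij) ξ) le_rfl
  rw [GP_eq_sortVec_add_single, GP_eq_sortVec_add_single]
  exact precP_sortVec_add_single hz (hmono hu) (hmono hv) (precP_max_sub_zero hu huv ξ)
    (boostGain_nonneg hσ ξ _) (boostGain_mono hσ ξ ((hu (hz P)).trans (huv.2 P le_rfl)))

/-- if `u ≺_P v` then `G(u) ≺_P G̃^P(v)`. -/
theorem precP_G_GP {S : ℕ} (hS : 0 < S) (P : Fin S) (σ ξ : ℝ)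
    (hσ : 0 ≤ σ) (hξ : 0 ≤ ξ)
    (u v : Fin S → ℝ)
    (hu : Monotone u) (hv : Monotone v)
    (hu0 : ∀ i, 0 ≤ u i) (hv0 : ∀ i, 0 ≤ v i)
    (huv : precP P u v) :
    precP P (GP σ ξ ⟨0, hS⟩ u) (GP σ ξ P v) :=
  precP_G_GP_general hS P σ ξ hσ u v hu hv huv
end

section
/- Let S ≥ 1, P ∈ {1,...,S}, and let σ ≥ 0 and ξ ≥ 0 be real numbers. Let u, v ∈ (ℝ⁺)^S be nondecreasingly sorted vectors such that u ≺_P v. Then G̃^P(u) ≺_P G̃^P(v), where G̃^P(w) = sort([w + σ·e_P − ξ·1]⁺). -/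
open Finset

section Aux
variable {S : ℕ}

lemma sortVec_apply (w : Fin S → ℝ) (i : Fin S) : sortVec w i = w (Tuple.sort w i) := rfl

lemma monotone_sortVec (w : Fin S → ℝ) : Monotone (sortVec w) := Tuple.monotone_sort w

lemma sortVec_nonneg {w : Fin S → ℝ} (hw : ∀ i, 0 ≤ w i) (i : Fin S) : 0 ≤ sortVec w i := hw _

/-- L0: the sum of a monotone nonnegative vector over any set is at most the
corresponding tail sum, provided the cardinalities compare. -/
lemma sum_le_tail {g : Fin S → ℝ} (hg : Monotone g) (hg0 : ∀ i, 0 ≤ g i)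
    (B : Finset (Fin S)) (k : Fin S) (hcard : B.card ≤ (Ici k).card) :
    ∑ i ∈ B, g i ≤ ∑ i ∈ Ici k, g i := by
  rcases Nat.eq_zero_or_pos B.card with h0 | hpos
  · rw [Finset.card_eq_zero.mp h0, Finset.sum_empty]
    exact Finset.sum_nonneg fun i _ => hg0 i
  · set m := B.card with hm
    have hkS : (k : ℕ) < S := k.isLt
    rw [Fin.card_Ici] at hcard
    have hmS : m ≤ S := by omega
    let e := B.orderEmbOfFin hm.symm
    have key : ∀ j : Fin m, (e j : ℕ) ≤ S - m + j := by
      intro j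
      have h2 : (Finset.Ici j).image e ⊆ Finset.Ici (e j) := by
        intro x hx
        obtain ⟨i, hi, rfl⟩ := Finset.mem_image.mp hx
        exact Finset.mem_Ici.mpr (e.monotone (Finset.mem_Ici.mp hi))
      have h3 := Finset.card_le_card h2
      rw [Finset.card_image_of_injective _ e.injective, Fin.card_Ici, Fin.card_Ici] at h3
      have hj : (j : ℕ) < m := j.isLt
      have hej : ((e j : Fin S) : ℕ) < S := (e j).isLt
      omega
    have hBe : B = Finset.image e Finset.univ := by
      apply Finset.coe_injective
      rw [Finset.coe_image, Finset.coe_univ, Set.image_univ, Finset.range_orderEmbOfFin]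
    have hBsum : ∑ i ∈ B, g i = ∑ j : Fin m, g (e j) := by
      rw [hBe, Finset.sum_image (fun x _ y _ h => e.injective h)]
    rw [hBsum]
    have hstep : ∀ j : Fin m, g (e j) ≤ g ⟨S - m + j, by omega⟩ := by
      intro j
      exact hg (by rw [Fin.le_def]; exact key j)
    calc ∑ j : Fin m, g (e j) ≤ ∑ j : Fin m, g ⟨S - m + (j : ℕ), by omega⟩ :=
          Finset.sum_le_sum fun j _ => hstep j
      _ = ∑ i ∈ (Finset.univ : Finset (Fin m)).image
            (fun j : Fin m => (⟨S - m + (j : ℕ), by omega⟩ : Fin S)), g i := by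
          rw [Finset.sum_image]
          intro x _ y _ h
          have h' : S - m + (x:ℕ) = S - m + (y:ℕ) := congrArg Fin.val h
          exact Fin.ext (by omega)
      _ ≤ ∑ i ∈ Ici k, g i := by
          apply Finset.sum_le_sum_of_subset_of_nonneg
          · intro x hx
            obtain ⟨j, _, rfl⟩ := Finset.mem_image.mp hx
            rw [Finset.mem_Ici, Fin.le_def]
            simp only []
            omega
          · exact fun i _ _ => hg0 i

/-- L1: the sum of any `w` over a set `B` is at most the tail sum of the sorted
version of `w`, for nonnegative `w`, provided the cardinalities compare. -/
lemma sum_le_sortVec_tail {w : Fin S → ℝ} (hw : ∀ i, 0 ≤ w i)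
    (B : Finset (Fin S)) (k : Fin S) (hcard : B.card ≤ (Ici k).card) :
    ∑ i ∈ B, w i ≤ ∑ i ∈ Ici k, sortVec w i := by
  set π := Tuple.sort w with hπ
  have him : (B.image π.symm).image π = B := by
    rw [Finset.image_image]
    simp [Function.comp]
  have h1 : ∑ i ∈ B, w i = ∑ j ∈ B.image π.symm, sortVec w j := by
    conv_lhs => rw [← him]
    rw [Finset.sum_image (fun x _ y _ h => π.injective h)]
    rfl
  rw [h1]
  apply sum_le_tail (monotone_sortVec w) (sortVec_nonneg hw) _ k
  rw [Finset.card_image_of_injective _ π.symm.injective]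
  exact hcard

/-- L2: tail sums of the sorted vector are sums of `w` over the image set. -/
lemma sortVec_tail_eq (w : Fin S → ℝ) (k : Fin S) :
    ∑ i ∈ Ici k, sortVec w i = ∑ i ∈ (Ici k).image (Tuple.sort w), w i := by
  rw [Finset.sum_image (fun x _ y _ h => (Tuple.sort w).injective h)]
  rfl

/-- L3: tail-sum domination is preserved by the positive part `[· - ξ]⁺`. -/
lemma tail_posPart_le {u v : Fin S → ℝ} (hu : Monotone u)
    (hstar : ∀ j : Fin S, ∑ i ∈ Ici j, u i ≤ ∑ i ∈ Ici j, v i) (ξ : ℝ) (k : Fin S) :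
    ∑ i ∈ Ici k, max (u i - ξ) 0 ≤ ∑ i ∈ Ici k, max (v i - ξ) 0 := by
  set T := (Ici k).filter (fun i => ξ < u i) with hT
  rcases T.eq_empty_or_nonempty with hTe | hTne
  · have hz : ∀ i ∈ Ici k, max (u i - ξ) 0 = 0 := by
      intro i hi
      have : ¬ ξ < u i := by
        intro h
        exact Finset.notMem_empty i (hTe ▸ Finset.mem_filter.mpr ⟨hi, h⟩)
      exact max_eq_right (by linarith [not_lt.mp this])
    rw [Finset.sum_congr rfl hz, Finset.sum_const_zero]
    exact Finset.sum_nonneg fun i _ => le_max_right _ _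
  · set j := T.min' hTne with hj
    have hjT : j ∈ T := T.min'_mem hTne
    have hjk : k ≤ j := (Finset.mem_Ici.mp (Finset.mem_filter.mp hjT).1)
    have hju : ξ < u j := (Finset.mem_filter.mp hjT).2
    have hTIci : T = Ici j := by
      apply Finset.Subset.antisymm
      · intro i hi
        exact Finset.mem_Ici.mpr (T.min'_le i hi)
      · intro i hi
        have hji : j ≤ i := Finset.mem_Ici.mp hi
        exact Finset.mem_filter.mpr ⟨Finset.mem_Ici.mpr (le_trans hjk hji),
          lt_of_lt_of_le hju (hu hji)⟩
    have hsplit : ∑ i ∈ Ici k, max (u i - ξ) 0 = ∑ i ∈ Ici j, (u i - ξ) := by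
      rw [← hTIci]
      rw [← Finset.sum_filter_add_sum_filter_not (Ici k) (fun i => ξ < u i)
        (fun i => max (u i - ξ) 0)]
      have h1 : ∑ i ∈ T, max (u i - ξ) 0 = ∑ i ∈ T, (u i - ξ) := by
        apply Finset.sum_congr rfl
        intro i hi
        exact max_eq_left (by linarith [(Finset.mem_filter.mp hi).2])
      have h2 : ∑ i ∈ (Ici k).filter (fun i => ¬ ξ < u i), max (u i - ξ) 0 = 0 := by
        apply Finset.sum_eq_zero
        intro i hi
        exact max_eq_right (by linarith [not_lt.mp (Finset.mem_filter.mp hi).2])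
      rw [h1, h2, add_zero]
    rw [hsplit]
    calc ∑ i ∈ Ici j, (u i - ξ) = ∑ i ∈ Ici j, u i - (Ici j).card • ξ := by
          rw [Finset.sum_sub_distrib, Finset.sum_const]
      _ ≤ ∑ i ∈ Ici j, v i - (Ici j).card • ξ := by
          have := hstar j; linarith
      _ = ∑ i ∈ Ici j, (v i - ξ) := by rw [Finset.sum_sub_distrib, Finset.sum_const]
      _ ≤ ∑ i ∈ Ici j, max (v i - ξ) 0 := Finset.sum_le_sum fun i _ => le_max_left _ _
      _ ≤ ∑ i ∈ Ici k, max (v i - ξ) 0 := by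
          apply Finset.sum_le_sum_of_subset_of_nonneg (Finset.Ici_subset_Ici.mpr hjk)
          exact fun i _ _ => le_max_right _ _

/-- (i): if `t` is below `w` on a set of at least `#(Ici ℓ)` indices,
then `t ≤ sortVec w ℓ`. -/
lemma le_sortVec_of_card {w : Fin S → ℝ} {A : Finset (Fin S)} {ℓ : Fin S}
    (hA : (Ici ℓ).card ≤ A.card) {t : ℝ} (h : ∀ a ∈ A, t ≤ w a) :
    t ≤ sortVec w ℓ := by
  set π := Tuple.sort w with hπ
  set A' := A.image π.symm with hA'
  have hcard : (Ici ℓ).card ≤ A'.card := by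
    rw [hA', Finset.card_image_of_injective _ π.symm.injective]; exact hA
  have hex : ∃ j ∈ A', j ≤ ℓ := by
    by_contra hc
    push_neg at hc
    have hsub : A' ⊆ Ioi ℓ := fun j hj => Finset.mem_Ioi.mpr (hc j hj)
    have := Finset.card_le_card hsub
    rw [Fin.card_Ioi] at this
    rw [Fin.card_Ici] at hcard
    have := ℓ.isLt
    omega
  obtain ⟨j, hjA', hjℓ⟩ := hex
  obtain ⟨a, haA, haj⟩ := Finset.mem_image.mp hjA'
  have h1 : sortVec w j = w a := by
    rw [sortVec_apply, ← hπ, ← haj, Equiv.apply_symm_apply]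
  calc t ≤ w a := h a haA
    _ = sortVec w j := h1.symm
    _ ≤ sortVec w ℓ := monotone_sortVec w hjℓ

/-- monotonicity of `a ↦ [a+σ-ξ]⁺ - [a-ξ]⁺`, in the additive form. -/
lemma clamp_mono {σ ξ a b : ℝ} (hσ : 0 ≤ σ) (hab : a ≤ b) :
    max (a + σ - ξ) 0 + max (b - ξ) 0 ≤ max (b + σ - ξ) 0 + max (a - ξ) 0 := by
  rcases le_total (a + σ - ξ) 0 with h1 | h1 <;>
  rcases le_total (b - ξ) 0 with h2 | h2 <;>
  simp only [max_eq_right h1, max_eq_left h1, max_eq_right h2, max_eq_left h2] <;>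
  · have hb1 : b + σ - ξ ≤ max (b + σ - ξ) 0 := le_max_left _ _
    have hb2 : (0:ℝ) ≤ max (b + σ - ξ) 0 := le_max_right _ _
    have ha1 : a - ξ ≤ max (a - ξ) 0 := le_max_left _ _
    have ha2 : (0:ℝ) ≤ max (a - ξ) 0 := le_max_right _ _
    linarith

/-- Component (I): tail sums of `G̃^P(u)` are dominated by those of `G̃^P(v)`. -/
lemma GP_tail_le (P : Fin S) {σ ξ : ℝ} (hσ : 0 ≤ σ)
    {u v : Fin S → ℝ} (hu : Monotone u)
    (hstar : ∀ j : Fin S, ∑ i ∈ Ici j, u i ≤ ∑ i ∈ Ici j, v i)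
    (hP : u P ≤ v P) (k : Fin S) :
    ∑ i ∈ Ici k, sortVec (fun i => max (u i + (if i = P then σ else 0) - ξ) 0) i ≤
    ∑ i ∈ Ici k, sortVec (fun i => max (v i + (if i = P then σ else 0) - ξ) 0) i := by
  set u' : Fin S → ℝ := fun i => max (u i + (if i = P then σ else 0) - ξ) 0 with hu'
  set v' : Fin S → ℝ := fun i => max (v i + (if i = P then σ else 0) - ξ) 0 with hv'
  set ut : Fin S → ℝ := fun i => max (u i - ξ) 0 with hut
  set vt : Fin S → ℝ := fun i => max (v i - ξ) 0 with hvt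
  have hv'0 : ∀ i, 0 ≤ v' i := fun i => le_max_right _ _
  have hut0 : ∀ i, 0 ≤ ut i := fun i => le_max_right _ _
  have hutmono : Monotone ut := fun a b hab =>
    max_le_max (sub_le_sub_right (hu hab) ξ) le_rfl
  have hu'ne : ∀ i, i ≠ P → u' i = ut i := by
    intro i hi; simp only [hu', hut, if_neg hi, add_zero]
  have hv'ne : ∀ i, i ≠ P → v' i = vt i := by
    intro i hi; simp only [hv', hvt, if_neg hi, add_zero]
  have hvtv' : ∀ i, vt i ≤ v' i := by
    intro i
    apply max_le_max _ le_rfl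
    have : (0:ℝ) ≤ (if i = P then σ else 0) := by split <;> simp [hσ]
    linarith
  have htails : ∀ j : Fin S, ∑ i ∈ Ici j, ut i ≤ ∑ i ∈ Ici j, vt i :=
    fun j => tail_posPart_le hu hstar ξ j
  have hu'P : u' P = max (u P + σ - ξ) 0 := by simp [hu']
  have hv'P : v' P = max (v P + σ - ξ) 0 := by simp [hv']
  have hu'v'P : u' P ≤ v' P := by
    rw [hu'P, hv'P]
    exact max_le_max (by linarith) le_rfl
  -- rewrite the LHS as a sum of `u'` over a set `A` of the right cardinality
  rw [sortVec_tail_eq]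
  set A := (Ici k).image (Tuple.sort u') with hA
  have hAcard : A.card = (Ici k).card :=
    Finset.card_image_of_injective _ (Tuple.sort u').injective
  by_cases hPA : P ∈ A
  · by_cases hkP : k ≤ P
    · -- Case 2 : `P ∈ A` and `k ≤ P`
      have e1 : ∑ i ∈ A, u' i = (∑ i ∈ A, ut i) + (u' P - ut P) := by
        rw [← Finset.add_sum_erase _ u' hPA, ← Finset.add_sum_erase _ ut hPA]
        have : ∑ i ∈ A.erase P, u' i = ∑ i ∈ A.erase P, ut i :=
          Finset.sum_congr rfl fun i hi => hu'ne i (Finset.mem_erase.mp hi).1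
        rw [this]; ring
      have hPk : P ∈ Ici k := Finset.mem_Ici.mpr hkP
      have e2 : ∑ i ∈ Ici k, v' i = (∑ i ∈ Ici k, vt i) + (v' P - vt P) := by
        rw [← Finset.add_sum_erase _ v' hPk, ← Finset.add_sum_erase _ vt hPk]
        have : ∑ i ∈ (Ici k).erase P, v' i = ∑ i ∈ (Ici k).erase P, vt i :=
          Finset.sum_congr rfl fun i hi => hv'ne i (Finset.mem_erase.mp hi).1
        rw [this]; ring
      have h3 : ∑ i ∈ A, ut i ≤ ∑ i ∈ Ici k, ut i :=
        sum_le_tail hutmono hut0 A k hAcard.le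
      have h4 := htails k
      have h5 : u' P + vt P ≤ v' P + ut P := by
        have := clamp_mono (ξ := ξ) hσ hP
        rw [hu'P, hv'P]
        simpa [hut, hvt] using this
      have h6 : ∑ i ∈ A, u' i ≤ ∑ i ∈ Ici k, v' i := by
        rw [e1, e2]; linarith
      exact le_trans h6 (sum_le_sortVec_tail hv'0 (Ici k) k le_rfl)
    · -- Case 3 : `P ∈ A` and `P < k`
      push_neg at hkP
      have hPkn : (P : ℕ) < (k : ℕ) := hkP
      have hkS : (k : ℕ) < S := k.isLt
      rcases Nat.lt_or_ge ((k : ℕ) + 1) S with hk1 | hk1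
      · -- `k` is not the top index
        set k' : Fin S := ⟨(k : ℕ) + 1, hk1⟩ with hk'
        have hk'v : (k' : ℕ) = (k : ℕ) + 1 := rfl
        have hPnotIci : P ∉ Ici k' := by
          rw [Finset.mem_Ici, Fin.le_def]
          omega
        have hcard' : (A.erase P).card ≤ (Ici k').card := by
          rw [Finset.card_erase_of_mem hPA, hAcard, Fin.card_Ici, Fin.card_Ici]
          omega
        have e1 : ∑ i ∈ A, u' i = u' P + ∑ i ∈ A.erase P, ut i := by
          rw [← Finset.add_sum_erase _ u' hPA]
          congr 1
          exact Finset.sum_congr rfl fun i hi => hu'ne i (Finset.mem_erase.mp hi).1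
        have h3 : ∑ i ∈ A.erase P, ut i ≤ ∑ i ∈ Ici k', ut i :=
          sum_le_tail hutmono hut0 _ k' hcard'
        have h4 := htails k'
        have h5 : ∑ i ∈ Ici k', vt i = ∑ i ∈ Ici k', v' i := by
          apply Finset.sum_congr rfl
          intro i hi
          have : i ≠ P := by
            intro h
            exact hPnotIci (h ▸ hi)
          rw [hv'ne i this]
        have e2 : v' P + ∑ i ∈ Ici k', v' i = ∑ i ∈ insert P (Ici k'), v' i :=
          (Finset.sum_insert hPnotIci).symm
        have hcardB : (insert P (Ici k')).card ≤ (Ici k).card := by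
          rw [Finset.card_insert_of_notMem hPnotIci, Fin.card_Ici, Fin.card_Ici]
          omega
        calc ∑ i ∈ A, u' i = u' P + ∑ i ∈ A.erase P, ut i := e1
          _ ≤ v' P + ∑ i ∈ Ici k', v' i := by linarith
          _ = ∑ i ∈ insert P (Ici k'), v' i := e2
          _ ≤ ∑ i ∈ Ici k, sortVec v' i := sum_le_sortVec_tail hv'0 _ k hcardB
      · -- `k` is the top index : `A = {P}`
        have hA1 : A.card = 1 := by
          rw [hAcard, Fin.card_Ici]; omega
        obtain ⟨a, ha⟩ := Finset.card_eq_one.mp hA1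
        have haP : a = P := by
          have := hPA
          rw [ha, Finset.mem_singleton] at this
          exact this.symm
        rw [ha, haP, Finset.sum_singleton]
        have : ∑ i ∈ ({P} : Finset (Fin S)), v' i ≤ ∑ i ∈ Ici k, sortVec v' i := by
          apply sum_le_sortVec_tail hv'0 _ k
          rw [Finset.card_singleton, Fin.card_Ici]
          omega
        rw [Finset.sum_singleton] at this
        exact le_trans hu'v'P this
  · -- Case 1 : `P ∉ A`
    have e1 : ∑ i ∈ A, u' i = ∑ i ∈ A, ut i :=
      Finset.sum_congr rfl fun i hi => hu'ne i (fun h => hPA (h ▸ hi))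
    have h3 : ∑ i ∈ A, ut i ≤ ∑ i ∈ Ici k, ut i :=
      sum_le_tail hutmono hut0 A k hAcard.le
    have h4 := htails k
    have h5 : ∑ i ∈ Ici k, vt i ≤ ∑ i ∈ Ici k, v' i :=
      Finset.sum_le_sum fun i _ => hvtv' i
    have h6 := sum_le_sortVec_tail hv'0 (Ici k) k le_rfl
    linarith

/-- Component (II): pointwise domination of `G̃^P(u)` by `G̃^P(v)` on indices `≥ P`. -/
lemma GP_pointwise_le (P ℓ : Fin S) (hℓ : P ≤ ℓ) {σ ξ : ℝ} (hσ : 0 ≤ σ)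
    {u v : Fin S → ℝ} (hu : Monotone u)
    (hpt : ∀ j : Fin S, P ≤ j → u j ≤ v j) :
    sortVec (fun i => max (u i + (if i = P then σ else 0) - ξ) 0) ℓ ≤
    sortVec (fun i => max (v i + (if i = P then σ else 0) - ξ) 0) ℓ := by
  set u' : Fin S → ℝ := fun i => max (u i + (if i = P then σ else 0) - ξ) 0 with hu'
  set v' : Fin S → ℝ := fun i => max (v i + (if i = P then σ else 0) - ξ) 0 with hv'
  have hsplit : ∀ i j : Fin S, i < P → P ≤ j → u' i ≤ u' j := by
    intro i j hi hj
    have hij : u i ≤ u j := hu (le_trans hi.le hj)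
    have hδ : (0:ℝ) ≤ (if j = P then σ else 0) := by split <;> simp [hσ]
    have hiP : i ≠ P := ne_of_lt hi
    simp only [hu', if_neg hiP, add_zero]
    exact max_le_max (by linarith) le_rfl
  have hptw : ∀ j : Fin S, P ≤ j → u' j ≤ v' j := by
    intro j hj
    simp only [hu', hv']
    exact max_le_max (by linarith [hpt j hj]) le_rfl
  set t := sortVec u' ℓ with ht
  set D := Finset.univ.filter (fun i => t ≤ u' i) with hD
  have hDmem : ∀ i, i ∈ D ↔ t ≤ u' i := by
    intro i; rw [hD, Finset.mem_filter]; simp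
  have hDcard : (Ici ℓ).card ≤ D.card := by
    have hsub : (Ici ℓ).image (Tuple.sort u') ⊆ D := by
      intro x hx
      obtain ⟨j, hj, rfl⟩ := Finset.mem_image.mp hx
      rw [hDmem]
      have : sortVec u' ℓ ≤ sortVec u' j := monotone_sortVec u' (Finset.mem_Ici.mp hj)
      exact this
    calc (Ici ℓ).card = ((Ici ℓ).image (Tuple.sort u')).card :=
          (Finset.card_image_of_injective _ (Tuple.sort u').injective).symm
      _ ≤ D.card := Finset.card_le_card hsub
  have hcardP : (Ici ℓ).card ≤ (Ici P).card := by
    rw [Fin.card_Ici, Fin.card_Ici]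
    have := Fin.le_def.mp hℓ
    omega
  obtain ⟨A, hAP, hAD, hAcard⟩ :
      ∃ A : Finset (Fin S), A ⊆ Ici P ∧ A ⊆ D ∧ A.card = (Ici ℓ).card := by
    by_cases hcase : ∃ i ∈ D, ¬ P ≤ i
    · obtain ⟨i, hiD, hiP⟩ := hcase
      have hIciD : Ici P ⊆ D := by
        intro j hj
        rw [hDmem]
        exact le_trans ((hDmem i).mp hiD)
          (hsplit i j (lt_of_not_ge hiP) (Finset.mem_Ici.mp hj))
      obtain ⟨A, hA1, hA2⟩ := Finset.exists_subset_card_eq hcardP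
      exact ⟨A, hA1, fun x hx => hIciD (hA1 hx), hA2⟩
    · push_neg at hcase
      have hDP : D ⊆ Ici P := fun i hi => Finset.mem_Ici.mpr (hcase i hi)
      obtain ⟨A, hA1, hA2⟩ := Finset.exists_subset_card_eq hDcard
      exact ⟨A, fun x hx => hDP (hA1 hx), hA1, hA2⟩
  apply le_sortVec_of_card hAcard.ge
  intro a ha
  exact le_trans ((hDmem a).mp (hAD ha)) (hptw a (Finset.mem_Ici.mp (hAP ha)))
end Aux


/-- if `u ≺_P v` then `G̃^P(u) ≺_P G̃^P(v)`. -/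
theorem precP_GP_GP {S : ℕ} (hS : 0 < S) (P : Fin S) (σ ξ : ℝ)
    (hσ : 0 ≤ σ) (hξ : 0 ≤ ξ)
    (u v : Fin S → ℝ)
    (hu : Monotone u) (hv : Monotone v)
    (hu0 : ∀ i, 0 ≤ u i) (hv0 : ∀ i, 0 ≤ v i)
    (huv : precP P u v) :
    precP P (GP σ ξ P u) (GP σ ξ P v) := by
  obtain ⟨hstar, hpt⟩ := huv
  constructor
  · intro k
    exact GP_tail_le P hσ hu hstar (hpt P le_rfl) k
  · intro ℓ hℓ
    exact GP_pointwise_le P ℓ hℓ hσ hu hpt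
end

section
/- Let 1 ≤ N ≤ S be integers and let σ ≥ 0, ξ ≥ 0 be real numbers. For a nondecreasingly sorted vector u ∈ (ℝ⁺)^N, let pad(u) ∈ (ℝ⁺)^S denote the vector (0,...,0,u(1),...,u(N)) obtained by prepending S−N zeros. Then pad(sort([u + σ·e₁ − ξ·1_N]⁺)) = sort([pad(u) + σ·e_{S−N+1} − ξ·1_S]⁺); that is, the padded Kiefer–Wolfowitz recursion of the N-server system coincides with one step of the map G̃^{S−N+1} on S coordinates applied to the padded vector. -/
open Finset

/-- The vector of `ℝ^S` obtained from a vector of `ℝ^N` (`N ≤ S`) by prepending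
`S − N` zero coordinates. -/
def pad {N S : ℕ} (hNS : N ≤ S) (u : Fin N → ℝ) : Fin S → ℝ :=
  fun i => if h : S - N ≤ (i : ℕ) then u ⟨(i : ℕ) - (S - N), by have := i.isLt; omega⟩ else 0

/-! The padding zeros are fixed by `x ↦ [x − ξ]⁺` (as `ξ ≥ 0`) and the kick `σ` lands on the first
non-padding coordinate, so the `S`-coordinate step maps `pad u` to `pad` of the `N`-coordinate step.
Sorting then commutes with `pad` on nonnegative vectors: padding the sorted vector gives a monotone
vector which is a rearrangement of the padded one, by a permutation fixing the padding. -/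

def padEquiv {N S : ℕ} (hNS : N ≤ S) : Fin (S - N) ⊕ Fin N ≃ Fin S :=
  finSumFinEquiv.trans (finCongr (Nat.sub_add_cancel hNS))

theorem pad_comp_padEquiv {N S : ℕ} (hNS : N ≤ S) (v : Fin N → ℝ) :
    pad hNS v ∘ padEquiv hNS = Sum.elim (fun _ => 0) v := by
  funext x
  rcases x with i | j
  · have := i.isLt
    simp only [Function.comp_apply, pad, padEquiv, Equiv.trans_apply, finSumFinEquiv_apply_left,
      finCongr_apply, Fin.val_cast, Fin.val_castAdd, Sum.elim_inl]
    exact dif_neg (by omega)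
  · simp [pad, padEquiv]

theorem pad_comp_padEquiv_sumCongr {N S : ℕ} (hNS : N ≤ S) (v : Fin N → ℝ)
    (π : Equiv.Perm (Fin N)) :
    pad hNS v ∘ (padEquiv hNS).permCongr ((Equiv.refl _).sumCongr π) = pad hNS (v ∘ π) := by
  rw [← (Equiv.comp_symm_eq _ _ _).mpr (pad_comp_padEquiv hNS v).symm,
    ← (Equiv.comp_symm_eq _ _ _).mpr (pad_comp_padEquiv hNS (v ∘ π)).symm]
  ext i
  rcases h : (padEquiv hNS).symm i with j | j <;> simp [Equiv.permCongr_apply, h]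

theorem sortVec_eq_of_comp_perm {S : ℕ} {f g : Fin S → ℝ} (τ : Equiv.Perm (Fin S))
    (hg : Monotone g) (hfg : f ∘ τ = g) : sortVec f = g := by
  unfold sortVec
  rw [← Tuple.comp_perm_comp_sort_eq_comp_sort (σ := τ), hfg,
    Tuple.sort_eq_refl_iff_monotone.mpr hg]
  rfl

theorem pad_monotone {N S : ℕ} (hNS : N ≤ S) {v : Fin N → ℝ} (hv : Monotone v)
    (hv0 : ∀ i, 0 ≤ v i) : Monotone (pad hNS v) := by
  intro i j hij
  unfold pad
  split_ifs with hi hj hj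
  · exact hv (Fin.mk_le_mk.mpr (by omega))
  · omega
  · exact hv0 _
  · rfl

theorem sortVec_pad {N S : ℕ} (hNS : N ≤ S) {v : Fin N → ℝ} (hv0 : ∀ i, 0 ≤ v i) :
    sortVec (pad hNS v) = pad hNS (sortVec v) :=
  sortVec_eq_of_comp_perm _ (pad_monotone hNS (Tuple.monotone_sort v) fun _ => hv0 _)
    (pad_comp_padEquiv_sumCongr hNS v (Tuple.sort v))

theorem posPart_step_pad {N S : ℕ} (hNS : N ≤ S) {σ ξ : ℝ} (hξ : 0 ≤ ξ) (u : Fin N → ℝ) :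
    (fun i : Fin S => max (pad hNS u i + (if (i : ℕ) = S - N then σ else 0) - ξ) 0) =
      pad hNS (fun i => max (u i + (if (i : ℕ) = 0 then σ else 0) - ξ) 0) := by
  funext i
  by_cases hi : S - N ≤ (i : ℕ)
  · simp only [pad, dif_pos hi, Nat.sub_eq_zero_iff_le, hi.ge_iff_eq']
  · simp only [pad, dif_neg hi, if_neg (show (i : ℕ) ≠ S - N by omega), add_zero, zero_sub]
    exact max_eq_right (neg_nonpos.mpr hξ)

theorem pad_KW_eq_GP_general {N S : ℕ} (hNS : N ≤ S) (σ ξ : ℝ)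
    (hξ : 0 ≤ ξ)
    (u : Fin N → ℝ) :
    pad hNS (sortVec (fun i => max (u i + (if (i : ℕ) = 0 then σ else 0) - ξ) 0)) =
      sortVec (fun i : Fin S =>
        max (pad hNS u i + (if (i : ℕ) = S - N then σ else 0) - ξ) 0) := by
  rw [posPart_step_pad hNS hξ u, sortVec_pad hNS fun _ => le_max_right _ _]

/-- padding the `N`-server Kiefer–Wolfowitz recursion with `S − N` zeros
coincides with one step of `G̃^{S−N+1}` on `S` coordinates applied to the padded vector. -/
theorem pad_KW_eq_GP {N S : ℕ} (hN : 0 < N) (hNS : N ≤ S) (σ ξ : ℝ)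
    (hσ : 0 ≤ σ) (hξ : 0 ≤ ξ)
    (u : Fin N → ℝ) (hu : Monotone u) (hu0 : ∀ i, 0 ≤ u i) :
    pad hNS (sortVec (fun i => max (u i + (if (i : ℕ) = 0 then σ else 0) - ξ) 0)) =
      sortVec (fun i : Fin S =>
        max (pad hNS u i + (if (i : ℕ) = S - N then σ else 0) - ξ) 0) :=
  pad_KW_eq_GP_general hNS σ ξ hξ u
end

section
/- Let 1 ≤ N ≤ S be integers and let (σ_n)_{n∈ℕ} and (ξ_n)_{n∈ℕ} be sequences of nonnegative real numbers. Define V^S_0 = 0 ∈ ℝ^S, V^N_0 = 0 ∈ ℝ^N, and for all n ∈ ℕ the Kiefer–Wolfowitz recursions V^S_{n+1} = sort([V^S_n + σ_n·e₁ − ξ_n·1_S]⁺) and V^N_{n+1} = sort([V^N_n + σ_n·e₁ − ξ_n·1_N]⁺). Then for every n ∈ ℕ: (i) V^S_n(S−N+ℓ) ≤ V^N_n(ℓ) for all ℓ ∈ {1,...,N}, and (ii) Σ_{i=1}^S V^S_n(i) ≤ Σ_{i=1}^N V^N_n(i). In particular the system with S servers started empty, fed by the same arrivals and services as the system with N servers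 started empty, has at every step a smaller total workload and smaller ordered workloads. -/
open Finset

/-!
Pad the `N`-server workload with `S - N` idle servers in front: the padded vector evolves by the
same map, except that each job joins position `S - N`, the least loaded real server, instead of
position `0`. It then suffices that one step of the two maps preserves `precP (S - N)`.
For the coordinates, either all `N` real servers of the padded system lie above a given level,
or swapping the two arrival positions injects the entries of the `S`-system above that level
into those of the padded system. For the tail sums, any `m` entries of the `S`-system just after
an arrival sum to at most some `m` entries of the padded one, and taking positive parts and
sorting preserve this.
-/

section Sorting

variable {S : ℕ}

lemma sortVec_monotone (x : Fin S → ℝ) : Monotone (sortVec x) :=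
  Tuple.monotone_sort x

lemma sortVec_eq_comp_of_monotone {x : Fin S → ℝ} (π : Equiv.Perm (Fin S))
    (h : Monotone (x ∘ π)) : sortVec x = x ∘ π :=
  (Tuple.comp_sort_eq_comp_iff_monotone.2 h).symm

lemma sortVec_comp_of_monotone {f : ℝ → ℝ} (hf : Monotone f) (x : Fin S → ℝ) :
    sortVec (f ∘ x) = f ∘ sortVec x :=
  sortVec_eq_comp_of_monotone _ (hf.comp (sortVec_monotone x))

lemma card_filter_lt_sortVec (x : Fin S → ℝ) (c : ℝ) :
    #{i | c < sortVec x i} = #{i | c < x i} :=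
  card_equiv (Tuple.sort x) (fun i => by simp only [mem_filter_univ]; rfl)

lemma sortVec_le_iff_card_lt {x : Fin S → ℝ} {ℓ : Fin S} {c : ℝ} :
    sortVec x ℓ ≤ c ↔ #{i | c < x i} < S - ℓ := by
  rw [← card_filter_lt_sortVec]
  constructor
  · intro h
    have hsub : ({i | c < sortVec x i} : Finset (Fin S)) ⊆ Ioi ℓ := fun i hi => by
      simp only [mem_filter_univ, mem_Ioi] at hi ⊢
      by_contra! hiℓ
      exact (h.trans_lt hi).not_ge (sortVec_monotone x hiℓ)
    have := card_le_card hsub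
    rw [Fin.card_Ioi] at this
    omega
  · intro h
    by_contra! hc
    have hsub : Ici ℓ ⊆ ({i | c < sortVec x i} : Finset (Fin S)) := fun i hi => by
      simp only [mem_filter_univ, mem_Ici] at hi ⊢
      exact hc.trans_le (sortVec_monotone x hi)
    have := card_le_card hsub
    rw [Fin.card_Ici] at this
    omega

lemma sum_le_sum_of_card_eq_of_forall_le {ι M : Type*} [AddCommMonoid M] [LinearOrder M]
    [IsOrderedAddMonoid M] {D E : Finset ι} {f : ι → M} (hcard : #D = #E)
    (h : ∀ d ∈ D, ∀ e ∈ E, f d ≤ f e) : ∑ i ∈ D, f i ≤ ∑ i ∈ E, f i := by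
  rcases D.eq_empty_or_nonempty with rfl | hD
  · rw [eq_comm, card_empty, card_eq_zero] at hcard
    simp [hcard]
  calc ∑ i ∈ D, f i ≤ #D • D.sup' hD f := sum_le_card_nsmul _ _ _ fun d hd => le_sup' f hd
    _ = #E • D.sup' hD f := by rw [hcard]
    _ ≤ ∑ i ∈ E, f i :=
      card_nsmul_le_sum _ _ _ fun e he => sup'_le _ _ fun d hd => h d hd e he

def topBlock (S t : ℕ) : Finset (Fin S) := {i | S ≤ i + t}

lemma mem_topBlock {t : ℕ} {i : Fin S} : i ∈ topBlock S t ↔ S ≤ i + t := by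
  simp [topBlock]

lemma topBlock_mono {t t' : ℕ} (h : t ≤ t') : topBlock S t ⊆ topBlock S t' := fun i hi => by
  rw [mem_topBlock] at hi ⊢
  omega

lemma topBlock_sub (k : Fin S) : topBlock S (S - k) = Ici k := by
  ext i
  rw [mem_topBlock, mem_Ici, Fin.le_def]
  omega

lemma topBlock_zero : topBlock S 0 = ∅ := by
  ext i
  simp [mem_topBlock]

lemma card_topBlock {t : ℕ} (ht : t ≤ S) : #(topBlock S t) = t := by
  rcases t.eq_zero_or_pos with rfl | ht0
  · simp [topBlock_zero]
  · have h := topBlock_sub (⟨S - t, by omega⟩ : Fin S)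
    rw [show S - (S - t) = t by omega] at h
    rw [h, Fin.card_Ici, Fin.val_mk]
    omega

lemma Monotone.sum_le_sum_topBlock {M : Type*} [AddCommMonoid M] [LinearOrder M]
    [IsOrderedAddMonoid M] {g : Fin S → M} (hg : Monotone g) (A : Finset (Fin S)) :
    ∑ i ∈ A, g i ≤ ∑ i ∈ topBlock S #A, g i := by
  set T := topBlock S #A
  have hT : #T = #A := card_topBlock (card_finset_fin_le A)
  rw [← sum_inter_add_sum_sdiff A T, ← sum_inter_add_sum_sdiff T A, inter_comm]
  refine add_le_add le_rfl (sum_le_sum_of_card_eq_of_forall_le ?_ fun d hd e he => hg ?_)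
  · have h1 := card_sdiff_add_card_inter A T
    have h2 := card_sdiff_add_card_inter T A
    rw [inter_comm] at h2
    omega
  · rw [mem_sdiff, mem_topBlock] at hd he
    rw [Fin.le_def]
    omega

lemma sum_le_sum_topBlock_sortVec (x : Fin S → ℝ) (A : Finset (Fin S)) :
    ∑ i ∈ A, x i ≤ ∑ i ∈ topBlock S #A, sortVec x i := by
  simpa [sortVec] using
    (sortVec_monotone x).sum_le_sum_topBlock (A.map (Tuple.sort x).symm.toEmbedding)

lemma sum_le_sum_topBlock_sortVec_of_nonneg {x : Fin S → ℝ} (hx : 0 ≤ x) {A : Finset (Fin S)}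
    {t : ℕ} (hA : #A ≤ t) : ∑ i ∈ A, x i ≤ ∑ i ∈ topBlock S t, sortVec x i :=
  (sum_le_sum_topBlock_sortVec x A).trans <|
    sum_le_sum_of_subset_of_nonneg (topBlock_mono hA) fun _ _ _ => hx _

lemma exists_sum_topBlock_sortVec_eq (x : Fin S → ℝ) (t : ℕ) :
    ∃ A : Finset (Fin S), #A = #(topBlock S t) ∧
      ∑ i ∈ topBlock S t, sortVec x i = ∑ i ∈ A, x i :=
  ⟨(topBlock S t).map (Tuple.sort x).toEmbedding, card_map _, by simp [sortVec]⟩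

lemma starLE_iff_topBlock {u v : Fin S → ℝ} :
    starLE u v ↔ ∀ t ≤ S, ∑ i ∈ topBlock S t, u i ≤ ∑ i ∈ topBlock S t, v i := by
  refine ⟨fun h t ht => ?_, fun h k => by simpa [topBlock_sub] using h (S - k) (Nat.sub_le _ _)⟩
  rcases t.eq_zero_or_pos with rfl | ht0
  · simp [topBlock_zero]
  · simpa [← topBlock_sub, show S - (S - t) = t by omega] using h ⟨S - t, by omega⟩

lemma starLE.sum_le {u v : Fin S → ℝ} (h : starLE u v) : ∑ i, u i ≤ ∑ i, v i := by
  simpa [topBlock] using starLE_iff_topBlock.1 h S le_rfl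

end Sorting

section Step

variable {S : ℕ} {σ ξ : ℝ} {P Q : Fin S} {u v : Fin S → ℝ}

lemma GP_eq_sortVec_comp :
    GP σ ξ P u = sortVec ((fun t => max (t - ξ) 0) ∘ fun i => u i + if i = P then σ else 0) :=
  rfl

lemma monotone_max_sub_zero : Monotone fun t : ℝ => max (t - ξ) 0 :=
  fun _ _ h => max_le_max (sub_le_sub_right h ξ) le_rfl

lemma exists_card_eq_sum_add_ite_le (hu : Monotone u) (hQP : Q ≤ P) (hσ : 0 ≤ σ)
    (h : precP P u v) (C : Finset (Fin S)) :
    ∃ B : Finset (Fin S), #B = #C ∧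
      ∑ i ∈ C, (u i + if i = Q then σ else 0) ≤
        ∑ i ∈ B, (v i + if i = P then σ else 0) := by
  simp only [sum_add_distrib, sum_ite_eq']
  have htop := starLE_iff_topBlock.1 h.1
  have hC : #C ≤ S := card_finset_fin_le C
  by_cases hcase : Q ∈ C ∧ P ∉ topBlock S #C
  · obtain ⟨hQC, hPC⟩ := hcase
    have hC0 : 0 < #C := card_pos.2 ⟨Q, hQC⟩
    have hP : P ∉ topBlock S (#C - 1) := fun h' => hPC (topBlock_mono (Nat.sub_le _ _) h')
    refine ⟨insert P (topBlock S (#C - 1)), ?_, ?_⟩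
    · rw [card_insert_of_notMem hP, card_topBlock (by omega)]
      omega
    rw [sum_insert hP, if_pos hQC, if_pos (mem_insert_self _ _), ← add_sum_erase C u hQC]
    have hQ : u Q ≤ v P := (hu hQP).trans (h.2 P le_rfl)
    have hrest : ∑ i ∈ C.erase Q, u i ≤ ∑ i ∈ topBlock S (#C - 1), u i := by
      simpa [card_erase_of_mem hQC] using hu.sum_le_sum_topBlock (C.erase Q)
    linarith [htop (#C - 1) (by omega)]
  · refine ⟨topBlock S #C, card_topBlock hC,
      add_le_add ((hu.sum_le_sum_topBlock C).trans (htop _ hC)) ?_⟩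
    split_ifs with hQ hP
    exacts [le_rfl, absurd ⟨hQ, hP⟩ hcase, hσ, le_rfl]

lemma starLE_GP (hu : Monotone u) (hQP : Q ≤ P) (hσ : 0 ≤ σ) (h : precP P u v) :
    starLE (GP σ ξ Q u) (GP σ ξ P v) := by
  rw [starLE_iff_topBlock, GP_eq_sortVec_comp, GP_eq_sortVec_comp]
  set f : ℝ → ℝ := fun t => max (t - ξ) 0
  set z : Fin S → ℝ := fun i => u i + if i = Q then σ else 0
  set w : Fin S → ℝ := fun i => v i + if i = P then σ else 0
  intro t ht
  obtain ⟨A, hA, hsumA⟩ := exists_sum_topBlock_sortVec_eq (f ∘ z) t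
  obtain ⟨B, hB, hzw⟩ := exists_card_eq_sum_add_ite_le hu hQP hσ h {i ∈ A | ξ < z i}
  have hx : ∑ i ∈ A, (f ∘ z) i = ∑ i ∈ A with ξ < z i, (z i - ξ) := by
    rw [← sum_filter_of_ne (p := fun i => ξ < z i) fun i _ hi => ?_]
    · exact sum_congr rfl fun i hi => max_eq_left (sub_nonneg.2 (mem_filter.1 hi).2.le)
    · by_contra hle
      exact hi (max_eq_right (sub_nonpos.2 (not_lt.1 hle)))
  have hy : ∑ i ∈ B, (w i - ξ) ≤ ∑ i ∈ B, (f ∘ w) i :=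
    sum_le_sum fun _ _ => le_max_left _ _
  have hB' : #B ≤ t := by
    rw [hB]
    exact (card_filter_le _ _).trans (hA.trans (card_topBlock ht)).le
  have hyB : ∑ i ∈ B, (f ∘ w) i ≤ ∑ i ∈ topBlock S t, sortVec (f ∘ w) i :=
    sum_le_sum_topBlock_sortVec_of_nonneg (fun _ => le_max_right _ _) hB'
  rw [hsumA, hx]
  simp only [sum_sub_distrib, sum_const, hB, nsmul_eq_mul] at hy ⊢
  linarith

lemma sortVec_add_ite_le (hu : Monotone u) (hQP : Q ≤ P) (hσ : 0 ≤ σ)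
    (huv : ∀ ℓ, P ≤ ℓ → u ℓ ≤ v ℓ) {ℓ : Fin S} (hℓ : P ≤ ℓ) :
    sortVec (fun i => u i + if i = Q then σ else 0) ℓ ≤
      sortVec (fun i => v i + if i = P then σ else 0) ℓ := by
  set c := sortVec (fun i => v i + if i = P then σ else 0) ℓ
  have hw : #{i | c < (v i + if i = P then σ else 0)} < S - ℓ := sortVec_le_iff_card_lt.1 le_rfl
  have hvw : ∀ i, v i ≤ (v i + if i = P then σ else 0) := fun i =>
    le_add_of_nonneg_right (ite_nonneg hσ le_rfl)
  refine sortVec_le_iff_card_lt.2 ?_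
  by_cases huP : c < u P
  · have hsub : Ici P ⊆ ({i | c < (v i + if i = P then σ else 0)} : Finset (Fin S)) :=
      fun j hj => by
      rw [mem_Ici] at hj
      rw [mem_filter_univ]
      exact huP.trans_le ((hu hj).trans ((huv j hj).trans (hvw j)))
    have := card_le_card hsub
    rw [Fin.card_Ici] at this
    have := Fin.le_def.1 hℓ
    omega
  refine lt_of_le_of_lt (card_le_card_of_injOn (Equiv.swap Q P) (fun i hi => ?_)
    (Equiv.swap Q P).injective.injOn) hw
  simp only [coe_filter, mem_univ, true_and, Set.mem_ofPred_eq] at hi ⊢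
  by_cases hiQ : i = Q
  · subst hiQ
    simp only [Equiv.swap_apply_left, if_true] at hi ⊢
    linarith [(hu hQP).trans (huv P le_rfl)]
  · rw [if_neg hiQ, add_zero] at hi
    have hPi : P < i := lt_of_not_ge fun hiP => huP (hi.trans_le (hu hiP))
    rw [Equiv.swap_apply_of_ne_of_ne hiQ hPi.ne']
    exact hi.trans_le ((huv i hPi.le).trans (hvw i))

lemma GP_le_GP (hu : Monotone u) (hQP : Q ≤ P) (hσ : 0 ≤ σ)
    (huv : ∀ ℓ, P ≤ ℓ → u ℓ ≤ v ℓ) {ℓ : Fin S} (hℓ : P ≤ ℓ) :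
    GP σ ξ Q u ℓ ≤ GP σ ξ P v ℓ := by
  simp only [GP_eq_sortVec_comp, sortVec_comp_of_monotone monotone_max_sub_zero,
    Function.comp_apply]
  exact monotone_max_sub_zero (sortVec_add_ite_le hu hQP hσ huv hℓ)

lemma precP_GP (hu : Monotone u) (hQP : Q ≤ P) (hσ : 0 ≤ σ) (h : precP P u v) :
    precP P (GP σ ξ Q u) (GP σ ξ P v) :=
  ⟨starLE_GP hu hQP hσ h, fun _ hℓ => GP_le_GP hu hQP hσ h.2 hℓ⟩

end Step

section Padding

variable {M N : ℕ}

lemma Fin.castAdd_lt_natAdd (i : Fin M) (j : Fin N) : Fin.castAdd N i < Fin.natAdd M j := by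
  rw [Fin.lt_def, Fin.val_castAdd, Fin.val_natAdd]
  omega

lemma monotone_append_zero {w : Fin N → ℝ} (hw : Monotone w) (hw0 : 0 ≤ w) :
    Monotone (Fin.append (0 : Fin M → ℝ) w) := by
  intro i j hij
  induction i using Fin.addCases with
  | left i =>
    induction j using Fin.addCases with
    | left j => simp
    | right j => simpa using hw0 j
  | right i =>
    induction j using Fin.addCases with
    | left j =>
      exact absurd hij (Fin.castAdd_lt_natAdd j i).not_ge
    | right j => simpa using hw ((Fin.natAdd_le_natAdd_iff M).1 hij)

lemma sortVec_append_zero {w : Fin N → ℝ} (hw0 : 0 ≤ w) :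
    sortVec (Fin.append (0 : Fin M → ℝ) w) = Fin.append 0 (sortVec w) := by
  have hπ : Fin.append (0 : Fin M → ℝ) w ∘
      finSumFinEquiv.permCongr (Equiv.sumCongr (Equiv.refl _) (Tuple.sort w)) =
      Fin.append 0 (sortVec w) := by
    ext i
    induction i using Fin.addCases <;> simp [Equiv.permCongr_apply, sortVec]
  rw [sortVec_eq_comp_of_monotone _ (hπ ▸ monotone_append_zero (sortVec_monotone w)
    fun i => hw0 (Tuple.sort w i)), hπ]

lemma GP_append_zero {σ ξ : ℝ} (hξ : 0 ≤ ξ) (P : Fin N) (w : Fin N → ℝ) :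
    GP σ ξ (Fin.natAdd M P) (Fin.append 0 w) = Fin.append 0 (GP σ ξ P w) := by
  refine (congrArg sortVec ?_).trans (sortVec_append_zero fun _ => le_max_right _ _)
  ext i
  induction i using Fin.addCases with
  | left i => simp [(Fin.castAdd_lt_natAdd i P).ne, hξ]
  | right i => simp

end Padding

/-- comparison of the Kiefer–Wolfowitz recursions with `S` and `N ≤ S`
servers, both started empty: sorted workloads and total workload are smaller with `S`
servers. -/
theorem KW_compare_servers {N S : ℕ} (hN : 0 < N) (hNS : N ≤ S) (σ ξ : ℕ → ℝ)
    (hσ : ∀ n, 0 ≤ σ n) (hξ : ∀ n, 0 ≤ ξ n)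
    (VS : ℕ → Fin S → ℝ) (VN : ℕ → Fin N → ℝ)
    (hVS0 : VS 0 = fun _ => 0) (hVN0 : VN 0 = fun _ => 0)
    (hVSrec : ∀ n, VS (n + 1) = GP (σ n) (ξ n) ⟨0, hN.trans_le hNS⟩ (VS n))
    (hVNrec : ∀ n, VN (n + 1) = GP (σ n) (ξ n) ⟨0, hN⟩ (VN n)) :
    ∀ n, (∀ ℓ : Fin N,
        VS n ⟨S - N + (ℓ : ℕ), by have := ℓ.isLt; omega⟩ ≤ VN n ℓ) ∧
      (∑ i, VS n i ≤ ∑ i, VN n i) := by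
  obtain ⟨M, rfl⟩ : ∃ M, S = M + N := ⟨S - N, by omega⟩
  set P : Fin (M + N) := Fin.natAdd M ⟨0, hN⟩
  have hVSmono : ∀ n, Monotone (VS n) := by
    rintro (_ | n)
    · exact hVS0 ▸ monotone_const
    · exact hVSrec n ▸ sortVec_monotone _
  have hpad : ∀ n, Fin.append (0 : Fin M → ℝ) (VN (n + 1)) =
      GP (σ n) (ξ n) P (Fin.append 0 (VN n)) := fun n => by
    rw [hVNrec, GP_append_zero (hξ n)]
  have hprec : ∀ n, precP P (VS n) (Fin.append 0 (VN n)) := by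
    intro n
    induction n with
    | zero =>
      have h0 : Fin.append (0 : Fin M → ℝ) (fun _ : Fin N => 0) = fun _ => 0 := by
        ext i
        induction i using Fin.addCases <;> simp
      rw [hVS0, hVN0, h0]
      exact ⟨fun _ => le_rfl, fun _ _ => le_rfl⟩
    | succ n ih =>
      rw [hVSrec, hpad]
      exact precP_GP (hVSmono n) (Fin.le_def.2 (Nat.zero_le _)) (hσ n) ih
  intro n
  refine ⟨fun ℓ => ?_, ?_⟩
  · have h := (hprec n).2 (Fin.natAdd M ℓ)
      ((Fin.natAdd_le_natAdd_iff M).2 (Fin.le_def.2 (Nat.zero_le _)))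
    rwa [Fin.append_right,
      show Fin.natAdd M ℓ = ⟨M + N - N + ℓ, _⟩ from Fin.ext (by simp)] at h
  · simpa [Fin.sum_univ_add] using (hprec n).1.sum_le
end

section
/- Let 1 ≤ N ≤ S be integers and let (σ_n)_{n∈ℕ} and (ξ_n)_{n∈ℕ} be sequences of nonnegative real numbers. Define V^S_0 = 0 ∈ ℝ^S, V^N_0 = 0 ∈ ℝ^N, and the Kiefer–Wolfowitz recursions V^S_{n+1} = sort([V^S_n + σ_n·e₁ − ξ_n·1_S]⁺) and V^N_{n+1} = sort([V^N_n + σ_n·e₁ − ξ_n·1_N]⁺). Then for every n ∈ ℕ, V^S_n(1) ≤ V^N_n(1): the offered waiting time in the S-server system is at most that in the N-server system. -/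
/-!
If `x ∈ ℝ^S` is dominated coordinatewise on its first `N` coordinates by `y ∈ ℝ^N`, then the
`k`-th smallest entry of `x` is at most the `k`-th smallest entry of `y` for every `k < N`:
there are at least as many entries of `x` below any level as there are entries of `y`.
Both recursions add the service time to the first coordinate and then apply coordinatewise
monotone maps before sorting, so this domination of the `S`-server profile by the `N`-server
profile on the first `N` servers propagates from the empty start to every `n`.
-/

open Finset

theorem sortVec_le_iff_lt_card {n : ℕ} (x : Fin n → ℝ) (k : Fin n) (t : ℝ) :
    sortVec x k ≤ t ↔ (k : ℕ) < #{i | x i ≤ t} := by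
  refine (Tuple.lt_card_le_iff_apply_le_of_monotone (Tuple.monotone_sort x)).symm.trans ?_
  rw [card_equiv (Tuple.sort x) (t := {i | x i ≤ t}) (by simp)]

theorem sortVec_castLE_le {N S : ℕ} (hNS : N ≤ S) {x : Fin S → ℝ} {y : Fin N → ℝ}
    (h : ∀ j, x (Fin.castLE hNS j) ≤ y j) (k : Fin N) :
    sortVec x (Fin.castLE hNS k) ≤ sortVec y k := by
  have hcard : #{j | y j ≤ sortVec y k} ≤ #{i | x i ≤ sortVec y k} :=
    card_le_card_of_injOn (Fin.castLE hNS)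
      (fun j hj => by simpa using (h j).trans (by simpa using hj))
      (Fin.castLE_injective hNS).injOn
  rw [sortVec_le_iff_lt_card]
  exact ((sortVec_le_iff_lt_card y k _).mp le_rfl).trans_le hcard

theorem GP_castLE_le {N S : ℕ} (hNS : N ≤ S) (σ ξ : ℝ) (P : Fin N) {u : Fin S → ℝ}
    {v : Fin N → ℝ} (h : ∀ j, u (Fin.castLE hNS j) ≤ v j) (k : Fin N) :
    GP σ ξ (Fin.castLE hNS P) u (Fin.castLE hNS k) ≤ GP σ ξ P v k := by
  refine sortVec_castLE_le hNS (fun j => ?_) k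
  simp only [(Fin.castLE_injective hNS).eq_iff]
  gcongr
  exact h j

theorem KW_compare_waiting_time_general {N S : ℕ} (hN : 0 < N) (hNS : N ≤ S) (σ ξ : ℕ → ℝ)
    (VS : ℕ → Fin S → ℝ) (VN : ℕ → Fin N → ℝ)
    (hVS0 : VS 0 = fun _ => 0) (hVN0 : VN 0 = fun _ => 0)
    (hVSrec : ∀ n, VS (n + 1) = GP (σ n) (ξ n) ⟨0, hN.trans_le hNS⟩ (VS n))
    (hVNrec : ∀ n, VN (n + 1) = GP (σ n) (ξ n) ⟨0, hN⟩ (VN n)) :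
    ∀ n, VS n ⟨0, hN.trans_le hNS⟩ ≤ VN n ⟨0, hN⟩ := by
  have dominated : ∀ n k, VS n (Fin.castLE hNS k) ≤ VN n k := by
    intro n
    induction n with
    | zero => simp [hVS0, hVN0]
    | succ n ih =>
      rw [hVSrec, hVNrec]
      exact GP_castLE_le hNS (σ n) (ξ n) ⟨0, hN⟩ ih
  exact fun n => dominated n ⟨0, hN⟩

/-- with `N ≤ S` servers, both systems started empty and fed by the same
arrivals and services, the offered waiting time with `S` servers is at most that with
`N` servers. -/
theorem KW_compare_waiting_time {N S : ℕ} (hN : 0 < N) (hNS : N ≤ S) (σ ξ : ℕ → ℝ)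
    (hσ : ∀ n, 0 ≤ σ n) (hξ : ∀ n, 0 ≤ ξ n)
    (VS : ℕ → Fin S → ℝ) (VN : ℕ → Fin N → ℝ)
    (hVS0 : VS 0 = fun _ => 0) (hVN0 : VN 0 = fun _ => 0)
    (hVSrec : ∀ n, VS (n + 1) = GP (σ n) (ξ n) ⟨0, hN.trans_le hNS⟩ (VS n))
    (hVNrec : ∀ n, VN (n + 1) = GP (σ n) (ξ n) ⟨0, hN⟩ (VN n)) :
    ∀ n, VS n ⟨0, hN.trans_le hNS⟩ ≤ VN n ⟨0, hN⟩ :=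
  KW_compare_waiting_time_general hN hNS σ ξ VS VN hVS0 hVN0 hVSrec hVNrec
end

section
/- Let S ≥ 1, P ∈ {1,...,S}, and let σ ≥ 0 and ξ ≥ 0 be real numbers. The map G̃^P defined by G̃^P(u) = sort([u + σ·e_P − ξ·1]⁺) is nondecreasing on nondecreasingly sorted vectors of (ℝ⁺)^S for the coordinatewise ordering: if u ≺ v then G̃^P(u) ≺ G̃^P(v). In particular the Kiefer–Wolfowitz map G = G̃^1 is ≺-nondecreasing. -/
open Finset

/-!
The map `u ↦ [u + σ e_P − ξ 1]⁺` is coordinatewise nondecreasing, so it suffices that sorting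
is. If `f ≤ g`, then among the `i + 1` indices carrying the `i + 1` smallest values of `g`, one
sits at position `≥ i` in the sorting of `f`, by pigeonhole; its `f`-value bounds the `i`-th
smallest value of `f` from above and its `g`-value bounds the `i`-th smallest value of `g` from
below.
-/

theorem Equiv.Perm.exists_le_le_apply {n : ℕ} (τ : Equiv.Perm (Fin n)) (i : Fin n) :
    ∃ k ≤ i, i ≤ τ k := by
  by_contra! h
  have hcard := card_le_card_of_injOn τ (s := Iic i) (t := Iio i)
    (fun k hk => by simpa using h k (by simpa using hk)) τ.injective.injOn
  rw [Fin.card_Iic, Fin.card_Iio] at hcard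
  omega

theorem Tuple.comp_sort_le_comp_sort {α : Type*} [LinearOrder α] {n : ℕ} {f g : Fin n → α}
    (h : f ≤ g) : f ∘ Tuple.sort f ≤ g ∘ Tuple.sort g := by
  intro i
  obtain ⟨k, hki, hik⟩ :=
    Equiv.Perm.exists_le_le_apply ((Tuple.sort g).trans (Tuple.sort f).symm) i
  calc (f ∘ Tuple.sort f) i
      ≤ (f ∘ Tuple.sort f) ((Tuple.sort f).symm (Tuple.sort g k)) := Tuple.monotone_sort f hik
    _ = f (Tuple.sort g k) := by simp
    _ ≤ g (Tuple.sort g k) := h _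
    _ ≤ (g ∘ Tuple.sort g) i := Tuple.monotone_sort g hki

theorem GP_monotone_general {S : ℕ} (P : Fin S) (σ ξ : ℝ)
    (u v : Fin S → ℝ)
    (huv : ∀ i, u i ≤ v i) :
    ∀ i, GP σ ξ P u i ≤ GP σ ξ P v i := by
  unfold GP sortVec
  exact Tuple.comp_sort_le_comp_sort fun j => max_le_max_right 0 (by gcongr; exact huv j)

/-- `G̃^P` is nondecreasing for the coordinatewise ordering on sorted
nonnegative vectors; in particular so is the Kiefer–Wolfowitz map `G = G̃^1`. -/
theorem GP_monotone {S : ℕ} (hS : 0 < S) (P : Fin S) (σ ξ : ℝ)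
    (hσ : 0 ≤ σ) (hξ : 0 ≤ ξ)
    (u v : Fin S → ℝ)
    (hu : Monotone u) (hv : Monotone v)
    (hu0 : ∀ i, 0 ≤ u i) (hv0 : ∀ i, 0 ≤ v i)
    (huv : ∀ i, u i ≤ v i) :
    ∀ i, GP σ ξ P u i ≤ GP σ ξ P v i :=
  GP_monotone_general P σ ξ u v huv
end

section
/- Let S ≥ 1, σ ≥ 0, ξ ≥ 0, and let u ∈ (ℝ⁺)^S be a nondecreasingly sorted vector. Then for every k ∈ {1,...,S}, Σ_{i=k}^S G(u)(i) = Σ_{i=k+1}^S [u(i) − ξ]⁺ + [max(u(1)+σ, u(k)) − ξ]⁺, where G(u) = sort([u + σ·e₁ − ξ·1]⁺). -/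
/-! Write `a = [u - ξ]⁺`, which is sorted, and `c = [u 0 + σ - ξ]⁺ ≥ a 0`. The vector to be
sorted is `a` with its first entry raised to `c`; sorting it only moves `c` up to the last
position `p` with `a p ≤ c`, i.e. permutes by the cycle `(0 1 … p)` = `Fin.cycleRange p`. Hence
a tail starting at `k ≤ p` consists of `c` and the `a i` with `i > k`, while a tail starting at
`k > p` is that of `a`; either way its sum is `∑_{i > k} a i + max c (a k)`, and
`max c (a k) = [max (u 0 + σ) (u k) - ξ]⁺` because `x ↦ [x - ξ]⁺` is monotone. -/

open Finset

lemma sortVec_comp_perm {S : ℕ} {w : Fin S → ℝ} (hw : Monotone w) (π : Equiv.Perm (Fin S)) :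
    sortVec (w ∘ π) = w := by
  rw [sortVec, Tuple.comp_perm_comp_sort_eq_comp_sort, Tuple.sort_eq_refl_iff_monotone.mpr hw]
  rfl

lemma Fin.map_cycleRange_Ici {n : ℕ} (p k : Fin (n + 1)) :
    (Ici k).map p.cycleRange.toEmbedding = if k ≤ p then insert 0 (Ioi k) else Ici k := by
  ext j
  rw [Finset.mem_map_equiv, apply_ite (j ∈ ·)]
  cases j using Fin.cases with
  | zero =>
    by_cases hkp : k ≤ p
    · simp [hkp]
    · simpa [hkp] using fun h : k ≤ 0 => hkp (h.trans p.zero_le)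
  | succ i =>
    simp only [cycleRange_symm_succ, Fin.succAbove, mem_Ici, mem_insert, mem_Ioi, succ_ne_zero,
      false_or, Fin.le_def, Fin.lt_def, Fin.val_castSucc, Fin.val_succ]
    split_ifs <;> simp only [Fin.val_castSucc, Fin.val_succ] <;> omega

lemma Fin.sum_Ici_comp_cycleRange {M : Type*} [AddCommMonoid M] {n : ℕ} (f : Fin (n + 1) → M)
    (p k : Fin (n + 1)) :
    ∑ j ∈ Ici k, f (p.cycleRange j) =
      if k ≤ p then f 0 + ∑ j ∈ Ioi k, f j else ∑ j ∈ Ici k, f j := by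
  calc ∑ j ∈ Ici k, f (p.cycleRange j) = ∑ j ∈ (Ici k).map p.cycleRange.toEmbedding, f j :=
        (sum_map (Ici k) p.cycleRange.toEmbedding f).symm
    _ = _ := by
      rw [Fin.map_cycleRange_Ici]
      split_ifs
      · exact sum_insert (by simp)
      · rfl

lemma Fin.monotone_insertNth {α : Type*} [Preorder α] {n : ℕ} {t : Fin n → α} (ht : Monotone t)
    {p : Fin (n + 1)} {c : α} (hlt : ∀ i, castSucc i < p → t i ≤ c)
    (hge : ∀ i, p ≤ castSucc i → c ≤ t i) : Monotone (p.insertNth c t) := by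
  intro j k hjk
  induction j using p.succAboveCases with
  | x =>
    induction k using p.succAboveCases with
    | x => simp
    | p i =>
      have : p < p.succAbove i := lt_of_le_of_ne hjk (succAbove_ne p i).symm
      simpa using hge i ((lt_succAbove_iff_le_castSucc p i).mp this)
  | p i =>
    induction k using p.succAboveCases with
    | x =>
      have : p.succAbove i < p := lt_of_le_of_ne hjk (succAbove_ne p i)
      simpa using hlt i ((succAbove_lt_iff_castSucc_lt p i).mp this)
    | p i' => simpa using ht (succAbove_le_succAbove_iff.mp hjk)

lemma Monotone.exists_apply_le_iff_le {ι α : Type*} [LinearOrder ι] [Fintype ι] [Preorder α]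
    {a : ι → α} (ha : Monotone a) {c : α} {i₀ : ι} (h₀ : a i₀ ≤ c) :
    ∃ p, ∀ j, a j ≤ c ↔ j ≤ p := by
  classical
  set s := univ.filter fun j => a j ≤ c
  have hne : s.Nonempty := ⟨i₀, by simpa [s] using h₀⟩
  refine ⟨s.max' hne, fun j => ⟨fun hj => s.le_max' j (by simpa [s] using hj), fun hj => ?_⟩⟩
  exact (ha hj).trans (by simpa [s] using s.max'_mem hne)

lemma Fin.update_zero_comp_cycleRange {α : Type*} {n : ℕ} (a : Fin (n + 1) → α) (c : α)
    (p : Fin (n + 1)) : Function.update a 0 c ∘ p.cycleRange = p.insertNth c (Fin.tail a) := by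
  conv_lhs => rw [← Fin.cons_self_tail a, Fin.update_cons_zero]
  exact Fin.cons_comp_cycleRange c (Fin.tail a) p

lemma sum_Ici_sortVec_update_zero {n : ℕ} {a : Fin (n + 1) → ℝ} (ha : Monotone a) {c : ℝ}
    (hc : a 0 ≤ c) (k : Fin (n + 1)) :
    ∑ i ∈ Ici k, sortVec (Function.update a 0 c) i = ∑ i ∈ Ioi k, a i + max c (a k) := by
  obtain ⟨p, hp⟩ := ha.exists_apply_le_iff_le hc
  have hlt : ∀ j, p < j → c < a j := fun j hj => not_le.mp fun h => hj.not_ge ((hp j).mp h)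
  have hsorted : Monotone (Function.update a 0 c ∘ p.cycleRange) := by
    rw [Fin.update_zero_comp_cycleRange]
    refine Fin.monotone_insertNth (ha.comp Fin.strictMono_succ.monotone) (fun i hi => ?_)
      (fun i hi => ?_)
    · exact (hp _).mpr (Fin.castSucc_lt_iff_succ_le.mp hi)
    · exact (hlt _ (Fin.le_castSucc_iff.mp hi)).le
  have hsort : sortVec (Function.update a 0 c) = Function.update a 0 c ∘ p.cycleRange := by
    simpa [Function.comp_assoc] using sortVec_comp_perm hsorted p.cycleRange.symm
  simp only [hsort, Function.comp_apply, Fin.sum_Ici_comp_cycleRange]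
  split_ifs with hkp
  · rw [max_eq_left ((hp k).mpr hkp), add_comm, Function.update_self,
      sum_update_of_notMem (by simp)]
  · have hk0 : (0 : Fin (n + 1)) ∉ Ici k := by
      simpa using ((Fin.zero_le p).trans_lt (not_le.mp hkp)).ne'
    rw [max_eq_right (hlt k (not_le.mp hkp)).le, sum_update_of_notMem hk0,
      ← add_sum_Ioi_eq_sum_Ici, add_comm]

theorem tailSum_G_general {S : ℕ} (hS : 0 < S) (σ ξ : ℝ)
    (hσ : 0 ≤ σ)
    (u : Fin S → ℝ) (hu : Monotone u) (k : Fin S) :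
    ∑ i ∈ Finset.Ici k, GP σ ξ ⟨0, hS⟩ u i =
      (∑ i ∈ Finset.Ioi k, max (u i - ξ) 0) +
        max (max (u ⟨0, hS⟩ + σ) (u k) - ξ) 0 := by
  obtain ⟨n, rfl⟩ : ∃ n, S = n + 1 := ⟨S - 1, by omega⟩
  have hf : Monotone fun x : ℝ => max (x - ξ) 0 :=
    fun x y h => max_le_max (sub_le_sub_right h ξ) le_rfl
  have hv : (fun i => max (u i + (if i = ⟨0, hS⟩ then σ else 0) - ξ) 0) =
      Function.update (fun i => max (u i - ξ) 0) 0 (max (u 0 + σ - ξ) 0) := by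
    funext i
    by_cases hi : i = 0 <;> simp [hi]
  have ha : Monotone fun i => max (u i - ξ) 0 := hf.comp hu
  have hc : max (u 0 - ξ) 0 ≤ max (u 0 + σ - ξ) 0 := hf (by linarith)
  rw [GP, hv, sum_Ici_sortVec_update_zero ha hc, hf.map_max]
  rfl

/-- tail sums of the Kiefer–Wolfowitz image `G(u)`. -/
theorem tailSum_G {S : ℕ} (hS : 0 < S) (σ ξ : ℝ)
    (hσ : 0 ≤ σ) (hξ : 0 ≤ ξ)
    (u : Fin S → ℝ) (hu : Monotone u) (hu0 : ∀ i, 0 ≤ u i) (k : Fin S) :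
    ∑ i ∈ Finset.Ici k, GP σ ξ ⟨0, hS⟩ u i =
      (∑ i ∈ Finset.Ioi k, max (u i - ξ) 0) +
        max (max (u ⟨0, hS⟩ + σ) (u k) - ξ) 0 :=
  tailSum_G_general hS σ ξ hσ u hu k
end

section
/- Let S ≥ 1, P ∈ {1,...,S}, σ ≥ 0, ξ ≥ 0, and let v ∈ (ℝ⁺)^S be a nondecreasingly sorted vector. Then for every k ∈ {1,...,P}, Σ_{i=k}^S G̃^P(v)(i) = Σ_{i=k, i≠P}^S [v(i) − ξ]⁺ + [v(P) + σ − ξ]⁺, where G̃^P(v) = sort([v + σ·e_P − ξ·1]⁺). -/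
open Finset

/-
Since `v` is sorted and `σ ≥ 0`, every coordinate of `w = [v + σ·e_P − ξ·1]⁺` before `k` is
at most every coordinate from `k` on (the bump at `P ≥ k` only raises a late coordinate, and
`x ↦ [x − ξ]⁺` is monotone). Sorting therefore maps the tail `{k,…,S}` onto a set of indices
carrying the same `w`-sum: an exchange argument compares any two index sets of equal size whose
symmetric difference is separated in value.
-/

theorem Finset.sum_le_sum_of_card_eq_of_forall_sdiff_le {ι M : Type*} [DecidableEq ι]
    [AddCommMonoid M] [LinearOrder M] [IsOrderedAddMonoid M] {w : ι → M} {A B : Finset ι} (hcard : #A = #B)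
    (h : ∀ a ∈ A \ B, ∀ b ∈ B \ A, w a ≤ w b) :
    ∑ a ∈ A, w a ≤ ∑ b ∈ B, w b := by
  have hsdiff : #(A \ B) = #(B \ A) := card_sdiff_comm hcard
  have key : ∑ a ∈ A \ B, w a ≤ ∑ b ∈ B \ A, w b := by
    rcases (B \ A).eq_empty_or_nonempty with hempty | hne
    · rw [hempty, card_empty, card_eq_zero] at hsdiff
      rw [hsdiff, hempty]
    · obtain ⟨b₀, hb₀, hb₀_min⟩ := exists_min_image (B \ A) w hne
      calc ∑ a ∈ A \ B, w a ≤ #(A \ B) • w b₀ :=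
            sum_le_card_nsmul _ _ _ fun a ha => h a ha b₀ hb₀
        _ = #(B \ A) • w b₀ := by rw [hsdiff]
        _ ≤ ∑ b ∈ B \ A, w b := card_nsmul_le_sum _ _ _ hb₀_min
  rw [← sum_inter_add_sum_sdiff A B w, ← sum_inter_add_sum_sdiff B A w, inter_comm]
  exact add_le_add_right key _

theorem Finset.sum_Ici_comp_perm_eq {ι M : Type*} [LinearOrder ι]
    [LocallyFiniteOrderTop ι] [AddCommMonoid M] [LinearOrder M] [IsOrderedAddMonoid M]
    {w : ι → M} (τ : Equiv.Perm ι) (hτ : Monotone (w ∘ τ)) (k : ι)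
    (hsep : ∀ a < k, ∀ b, k ≤ b → w a ≤ w b) :
    ∑ i ∈ Ici k, w (τ i) = ∑ i ∈ Ici k, w i := by
  rw [← sum_image (f := w) fun a _ b _ h => τ.injective h]
  have hcard : #((Ici k).image τ) = #(Ici k) := card_image_of_injective _ τ.injective
  have hpre {a : ι} (ha : a ∉ (Ici k).image τ) : τ.symm a < k := by
    by_contra! hle
    exact ha (mem_image.mpr ⟨τ.symm a, mem_Ici.mpr hle, τ.apply_symm_apply a⟩)
  apply le_antisymm
  · refine sum_le_sum_of_card_eq_of_forall_sdiff_le hcard fun a ha b hb => ?_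
    simp only [mem_sdiff, mem_Ici, not_le] at ha hb
    exact hsep a ha.2 b hb.1
  · refine sum_le_sum_of_card_eq_of_forall_sdiff_le hcard.symm fun a ha b hb => ?_
    obtain ⟨j, hj, rfl⟩ := mem_image.mp (mem_sdiff.mp hb).1
    have hle : τ.symm a ≤ j := ((hpre (mem_sdiff.mp ha).2).trans_le (mem_Ici.mp hj)).le
    simpa using hτ hle

theorem sum_Ici_sortVec_eq {S : ℕ} {w : Fin S → ℝ} (k : Fin S)
    (hsep : ∀ a < k, ∀ b, k ≤ b → w a ≤ w b) :
    ∑ i ∈ Ici k, sortVec w i = ∑ i ∈ Ici k, w i :=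
  sum_Ici_comp_perm_eq _ (Tuple.monotone_sort w) k hsep

theorem tailSum_GP_general {S : ℕ} (P : Fin S) (σ ξ : ℝ)
    (hσ : 0 ≤ σ)
    (v : Fin S → ℝ) (hv : Monotone v)
    (k : Fin S) (hk : k ≤ P) :
    ∑ i ∈ Finset.Ici k, GP σ ξ P v i =
      (∑ i ∈ (Finset.Ici k).erase P, max (v i - ξ) 0) +
        max (v P + σ - ξ) 0 := by
  have hsep : ∀ a < k, ∀ b, k ≤ b →
      max (v a + (if a = P then σ else 0) - ξ) 0 ≤ max (v b + (if b = P then σ else 0) - ξ) 0 := by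
    intro a ha b hb
    have hvab : v a ≤ v b := hv (ha.le.trans hb)
    rw [if_neg (ha.trans_le hk).ne]
    gcongr
    split_ifs <;> linarith
  rw [GP, sum_Ici_sortVec_eq k hsep, ← sum_erase_add _ _ (mem_Ici.mpr hk), if_pos rfl]
  congr 1
  exact sum_congr rfl fun i hi => by rw [if_neg (ne_of_mem_erase hi), add_zero]

/-- tail sums of `G̃^P(v)` for `k ≤ P`. -/
theorem tailSum_GP {S : ℕ} (hS : 0 < S) (P : Fin S) (σ ξ : ℝ)
    (hσ : 0 ≤ σ) (hξ : 0 ≤ ξ)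
    (v : Fin S → ℝ) (hv : Monotone v) (hv0 : ∀ i, 0 ≤ v i)
    (k : Fin S) (hk : k ≤ P) :
    ∑ i ∈ Finset.Ici k, GP σ ξ P v i =
      (∑ i ∈ (Finset.Ici k).erase P, max (v i - ξ) 0) +
        max (v P + σ - ξ) 0 :=
  tailSum_GP_general P σ ξ hσ v hv k hk
end

section
/- Let S ≥ 1, P ∈ {1,...,S}, σ ≥ 0, ξ ≥ 0, and let u, v ∈ (ℝ⁺)^S be nondecreasingly sorted vectors with u ≺_* v and u(P) ≤ v(P). Then [sort(u + σ·e_P) − ξ·1]⁺ ≺_* [sort(v + σ·e_P) − ξ·1]⁺. -/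
open Finset

/-- Key lemma: sum over any set of bounded card/range ≤ sum over a top interval. -/
lemma sum_le_tail_s18 {S : ℕ} (w : Fin S → ℝ) (hw : Monotone w) (hw0 : ∀ i, 0 ≤ w i) :
    ∀ (n : ℕ) (A : Finset (Fin S)) (t c : ℕ), A.card = n → c ≤ S →
    (∀ i ∈ A, (i : ℕ) < c) → n + t ≤ c →
    ∑ i ∈ A, w i ≤ ∑ i ∈ univ.filter (fun i : Fin S => t ≤ (i : ℕ) ∧ (i : ℕ) < c), w i := by
  intro n
  induction n with
  | zero =>
    intro A t c hA _ _ _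
    rw [Finset.card_eq_zero.mp hA, Finset.sum_empty]
    exact Finset.sum_nonneg fun i _ => hw0 i
  | succ m ih =>
    intro A t c hA hc hAc hn
    have hAne : A.Nonempty := card_pos.mp (by omega)
    set a := A.max' hAne with ha
    have haA : a ∈ A := A.max'_mem hAne
    have hac : (a : ℕ) < c := hAc a haA
    have hc1 : c - 1 < S := by omega
    have key : ∀ i ∈ A.erase a, (i : ℕ) < c - 1 := by
      intro i hi
      have h1 : i ≠ a := (Finset.mem_erase.mp hi).1
      have h2 : i ≤ a := A.le_max' i (Finset.mem_erase.mp hi).2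
      have h3 : (i : ℕ) ≤ (a : ℕ) := h2
      have h4 : (i : ℕ) ≠ (a : ℕ) := fun h => h1 (Fin.ext h)
      omega
    have hcard : (A.erase a).card = m := by
      simp [Finset.card_erase_of_mem haA, hA]
    have ihA := ih (A.erase a) t (c - 1) hcard (by omega) key (by omega)
    have hsplit : univ.filter (fun i : Fin S => t ≤ (i : ℕ) ∧ (i : ℕ) < c)
        = insert ⟨c - 1, hc1⟩ (univ.filter (fun i : Fin S => t ≤ (i : ℕ) ∧ (i : ℕ) < c - 1)) := by
      ext i
      simp only [Finset.mem_insert, Finset.mem_filter, Finset.mem_univ, true_and, Fin.ext_iff]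
      omega
    rw [hsplit, Finset.sum_insert (by simp only [Finset.mem_filter, Finset.mem_univ, true_and]; omega)]
    rw [← Finset.add_sum_erase _ _ haA]
    exact add_le_add (hw (show a ≤ (⟨c - 1, hc1⟩ : Fin S) from by
      simp only [Fin.le_def]; omega)) ihA

lemma filter_eq_Ici {S : ℕ} (k : Fin S) :
    univ.filter (fun i : Fin S => (k : ℕ) ≤ (i : ℕ) ∧ (i : ℕ) < S) = Ici k := by
  ext i
  simp only [Finset.mem_filter, Finset.mem_univ, true_and, Finset.mem_Ici, Fin.le_def]
  exact ⟨fun h => h.1, fun h => ⟨h, i.isLt⟩⟩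

lemma filter_eq_Ioi {S : ℕ} (k : Fin S) :
    univ.filter (fun i : Fin S => (k : ℕ) + 1 ≤ (i : ℕ) ∧ (i : ℕ) < S) = Ioi k := by
  ext i
  simp only [Finset.mem_filter, Finset.mem_univ, true_and, Finset.mem_Ioi, Fin.lt_def]
  omega

/-- Sum of sorted tail equals sum over some set of the right cardinality. -/
lemma tail_sort_eq {S : ℕ} (w : Fin S → ℝ) (k : Fin S) :
    ∃ A : Finset (Fin S), A.card = (Ici k).card ∧
      ∑ i ∈ Ici k, sortVec w i = ∑ i ∈ A, w i := by
  refine ⟨(Ici k).image (Tuple.sort w), ?_, ?_⟩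
  · exact Finset.card_image_of_injective _ (Equiv.injective _)
  · rw [Finset.sum_image (fun a _ b _ h => (Equiv.injective _) h)]
    rfl

/-- Sum over any set of the right cardinality is ≤ sorted tail sum. -/
lemma le_tail_sort {S : ℕ} (w : Fin S → ℝ) (hw0 : ∀ i, 0 ≤ w i) (k : Fin S)
    (A : Finset (Fin S)) (hA : A.card = (Ici k).card) :
    ∑ i ∈ A, w i ≤ ∑ i ∈ Ici k, sortVec w i := by
  have hmono : Monotone (sortVec w) := Tuple.monotone_sort w
  have hnn : ∀ i, 0 ≤ sortVec w i := fun i => hw0 _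
  have hAcard : A.card = S - (k : ℕ) := by rw [hA, Fin.card_Ici]
  have h1 : ∑ i ∈ A, w i = ∑ i ∈ A.image (Tuple.sort w).symm, sortVec w i := by
    rw [Finset.sum_image (fun a _ b _ h => (Equiv.injective _) h)]
    apply Finset.sum_congr rfl
    intro i _
    simp [sortVec]
  rw [h1, ← filter_eq_Ici]
  apply sum_le_tail_s18 (sortVec w) hmono hnn (S - (k : ℕ)) _ (k : ℕ) S
  · rw [Finset.card_image_of_injective _ (Equiv.injective _), hAcard]
  · exact le_rfl
  · intro i _; exact i.isLt
  · omega

lemma starLE_Ioi {S : ℕ} {u v : Fin S → ℝ} (huv : starLE u v) (k : Fin S) :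
    ∑ i ∈ Ioi k, u i ≤ ∑ i ∈ Ioi k, v i := by
  by_cases h : (k : ℕ) + 1 < S
  · have hI : Ioi k = Ici (⟨(k : ℕ) + 1, h⟩ : Fin S) := by
      ext i
      simp only [Finset.mem_Ioi, Finset.mem_Ici, Fin.lt_def, Fin.le_def]
      omega
    rw [hI]; exact huv _
  · have hI : Ioi k = (∅ : Finset (Fin S)) := by
      ext i
      simp only [Finset.mem_Ioi, Fin.lt_def, Finset.notMem_empty, iff_false, not_lt]
      omega
    simp [hI]

lemma pos_tail_le {S : ℕ} (x y : Fin S → ℝ) (hx : Monotone x) (ξ : ℝ)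
    (hxy : ∀ k : Fin S, ∑ i ∈ Ici k, x i ≤ ∑ i ∈ Ici k, y i) (k : Fin S) :
    ∑ i ∈ Ici k, max (x i - ξ) 0 ≤ ∑ i ∈ Ici k, max (y i - ξ) 0 := by
  set T := (Ici k).filter (fun i => ξ < x i) with hT
  have hsum : ∑ i ∈ Ici k, max (x i - ξ) 0 = ∑ i ∈ T, (x i - ξ) := by
    rw [hT, Finset.sum_filter]
    apply Finset.sum_congr rfl
    intro i _
    split_ifs with h
    · exact max_eq_left (by linarith)
    · exact max_eq_right (by push_neg at h; linarith)
  rcases T.eq_empty_or_nonempty with hTe | hTne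
  · rw [hsum, hTe, Finset.sum_empty]
    exact Finset.sum_nonneg fun i _ => le_max_right _ _
  · set t := T.min' hTne with ht
    have htT : t ∈ T := T.min'_mem hTne
    have hkt : k ≤ t := Finset.mem_Ici.mp (Finset.mem_filter.mp htT).1
    have hxt : ξ < x t := (Finset.mem_filter.mp htT).2
    have hTI : T = Ici t := by
      apply Finset.Subset.antisymm
      · intro i hi; exact Finset.mem_Ici.mpr (T.min'_le i hi)
      · intro i hi
        have hti : t ≤ i := Finset.mem_Ici.mp hi
        exact Finset.mem_filter.mpr ⟨Finset.mem_Ici.mpr (le_trans hkt hti),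
          lt_of_lt_of_le hxt (hx hti)⟩
    rw [hsum, hTI]
    have h1 : ∑ i ∈ Ici t, (x i - ξ) ≤ ∑ i ∈ Ici t, (y i - ξ) := by
      rw [Finset.sum_sub_distrib, Finset.sum_sub_distrib]
      exact sub_le_sub_right (hxy t) _
    calc ∑ i ∈ Ici t, (x i - ξ) ≤ ∑ i ∈ Ici t, (y i - ξ) := h1
      _ ≤ ∑ i ∈ Ici t, max (y i - ξ) 0 := Finset.sum_le_sum fun i _ => le_max_left _ _
      _ ≤ ∑ i ∈ Ici k, max (y i - ξ) 0 :=
          Finset.sum_le_sum_of_subset_of_nonneg (Finset.Ici_subset_Ici.mpr hkt)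
            (fun i _ _ => le_max_right _ _)

lemma sort_tail_le {S : ℕ} (P : Fin S) (σ : ℝ) (hσ : 0 ≤ σ) (u v : Fin S → ℝ)
    (hu : Monotone u) (hu0 : ∀ i, 0 ≤ u i) (hv0 : ∀ i, 0 ≤ v i)
    (huv : starLE u v) (hP : u P ≤ v P) (k : Fin S) :
    ∑ i ∈ Ici k, sortVec (fun j => u j + (if j = P then σ else 0)) i ≤
    ∑ i ∈ Ici k, sortVec (fun j => v j + (if j = P then σ else 0)) i := by
  set u' := fun j => u j + (if j = P then σ else 0) with hu'
  set v' := fun j => v j + (if j = P then σ else 0) with hv'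
  have hite : ∀ j : Fin S, (0:ℝ) ≤ (if j = P then σ else 0) := by
    intro j; split_ifs <;> simp [hσ]
  have hu'0 : ∀ i, 0 ≤ u' i := fun i => add_nonneg (hu0 i) (hite i)
  have hv'0 : ∀ i, 0 ≤ v' i := fun i => add_nonneg (hv0 i) (hite i)
  obtain ⟨A, hAcard, hAeq⟩ := tail_sort_eq u' k
  rw [hAeq]
  have hAcard' : A.card = S - (k : ℕ) := by rw [hAcard, Fin.card_Ici]
  have hsplitA : ∑ i ∈ A, u' i = ∑ i ∈ A, u i + (if P ∈ A then σ else 0) := by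
    rw [hu', Finset.sum_add_distrib, Finset.sum_ite_eq' A P (fun _ => σ)]
  have hAu : ∑ i ∈ A, u i ≤ ∑ i ∈ Ici k, u i := by
    rw [← filter_eq_Ici]
    apply sum_le_tail_s18 u hu hu0 (S - (k : ℕ)) A (k : ℕ) S hAcard' le_rfl
      (fun i _ => i.isLt) (by omega)
  by_cases hPA : P ∈ A
  · by_cases hkP : k ≤ P
    · have hPk : P ∈ Ici k := Finset.mem_Ici.mpr hkP
      have hv'sum : ∑ i ∈ Ici k, v' i = ∑ i ∈ Ici k, v i + σ := by
        rw [hv', Finset.sum_add_distrib, Finset.sum_ite_eq' (Ici k) P (fun _ => σ), if_pos hPk]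
      have : ∑ i ∈ A, u' i ≤ ∑ i ∈ Ici k, v' i := by
        rw [hsplitA, if_pos hPA, hv'sum]
        exact add_le_add (le_trans hAu (huv k)) le_rfl
      exact le_trans this (le_tail_sort v' hv'0 k (Ici k) rfl)
    · push_neg at hkP
      have hPIoi : P ∉ Ioi k := by
        simp only [Finset.mem_Ioi, not_lt]
        exact le_of_lt hkP
      set A' := insert P (Ioi k) with hA'
      have hA'card : A'.card = (Ici k).card := by
        rw [hA', Finset.card_insert_of_notMem hPIoi, Fin.card_Ioi, Fin.card_Ici]
        have := k.isLt; omega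
      have hv'A' : ∑ i ∈ A', v' i = (v P + σ) + ∑ i ∈ Ioi k, v i := by
        rw [hA', Finset.sum_insert hPIoi]
        congr 1
        · simp [hv']
        · apply Finset.sum_congr rfl
          intro i hi
          have : i ≠ P := by
            intro h; exact hPIoi (h ▸ hi)
          simp [hv', this]
      have herase : ∑ i ∈ A.erase P, u i ≤ ∑ i ∈ Ioi k, u i := by
        rw [← filter_eq_Ioi]
        apply sum_le_tail_s18 u hu hu0 (S - 1 - (k : ℕ)) _ ((k : ℕ) + 1) S
        · rw [Finset.card_erase_of_mem hPA, hAcard']; have := k.isLt; omega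
        · exact le_rfl
        · intro i _; exact i.isLt
        · have := k.isLt; omega
      have hAuP : ∑ i ∈ A, u i = u P + ∑ i ∈ A.erase P, u i :=
        (Finset.add_sum_erase _ _ hPA).symm
      have hIoi := starLE_Ioi huv k
      have hstep : ∑ i ∈ A, u' i ≤ ∑ i ∈ A', v' i := by
        rw [hsplitA, if_pos hPA, hv'A', hAuP]
        linarith
      exact le_trans hstep (le_tail_sort v' hv'0 k A' hA'card)
  · have hstep : ∑ i ∈ A, u' i ≤ ∑ i ∈ Ici k, v' i := by
      rw [hsplitA, if_neg hPA, add_zero]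
      refine le_trans hAu (le_trans (huv k) (Finset.sum_le_sum fun i _ => ?_))
      exact le_add_of_nonneg_right (hite i)
    exact le_trans hstep (le_tail_sort v' hv'0 k (Ici k) rfl)

/-- if `u ≺_* v` and `u(P) ≤ v(P)` then
`[sort(u + σ·e_P) − ξ·1]⁺ ≺_* [sort(v + σ·e_P) − ξ·1]⁺`. -/
theorem starLE_pos_part_sort_add {S : ℕ} (hS : 0 < S) (P : Fin S) (σ ξ : ℝ)
    (hσ : 0 ≤ σ) (hξ : 0 ≤ ξ)
    (u v : Fin S → ℝ)
    (hu : Monotone u) (hv : Monotone v)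
    (hu0 : ∀ i, 0 ≤ u i) (hv0 : ∀ i, 0 ≤ v i)
    (huv : starLE u v) (hP : u P ≤ v P) :
    starLE
      (fun i => max (sortVec (fun j => u j + (if j = P then σ else 0)) i - ξ) 0)
      (fun i => max (sortVec (fun j => v j + (if j = P then σ else 0)) i - ξ) 0) := by
  intro k
  exact pos_tail_le _ _ (Tuple.monotone_sort _) ξ
    (sort_tail_le P σ hσ u v hu hu0 hv0 huv hP) k
end

section
/- Let S ≥ 1, P ∈ {1,...,S}, σ ≥ 0, ξ ≥ 0, and let u, v ∈ (ℝ⁺)^S be nondecreasingly sorted vectors with u ≺_P v. Then for every ℓ ∈ {P,...,S}, G(u)(ℓ) ≤ G̃^P(v)(ℓ), where G(u) = sort([u + σ·e₁ − ξ·1]⁺) and G̃^P(v) = sort([v + σ·e_P − ξ·1]⁺). -/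
/-!
Let `a = [u + σ e₁ − ξ]⁺`, `b = [v + σ e_P − ξ]⁺` and `c = sort(b)(ℓ)`; then
`sort(a)(ℓ) ≤ c` as soon as `ℓ` entries of `a` are `≤ c`.
The `S − ℓ + 1` entries of `b` at indices `≥ ℓ` are all `≥ [v ℓ − ξ]⁺`, hence so is `c`;
this bounds the `ℓ − 1` entries `a i = [u i − ξ]⁺ ≤ [v ℓ − ξ]⁺`, `1 < i ≤ ℓ`.
One more entry of `a` is found among the `S − ℓ + 1` indices `{P} ∪ (ℓ, S]`: one of them
has `b j ≤ c`, and either `j = P`, where `a 1 ≤ b P`, or `j > ℓ`, where `a j ≤ b j`.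
(Indices in `Fin S` start at `0`, so `e₁` is `e ⟨0, hS⟩`.)
-/

open Finset

section sortVec

variable {S : ℕ} (w : Fin S → ℝ) {ℓ : Fin S} {c : ℝ}

lemma sortVec_symm_sort_apply (i : Fin S) : sortVec w ((Tuple.sort w).symm i) = w i := by
  simp [sortVec]

lemma sortVec_le_of_card_le (A : Finset (Fin S)) (hA : (ℓ : ℕ) + 1 ≤ #A) (h : ∀ i ∈ A, w i ≤ c) :
    sortVec w ℓ ≤ c := by
  by_contra! hc
  have hmaps : Set.MapsTo (Tuple.sort w).symm A (Iio ℓ) := fun i hi =>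
    mem_Iio.mpr <| (Tuple.monotone_sort w).reflect_lt <|
      ((sortVec_symm_sort_apply w i).trans_le (h i hi)).trans_lt hc
  have := card_le_card_of_injOn _ hmaps (Tuple.sort w).symm.injective.injOn
  rw [Fin.card_Iio] at this
  omega

lemma le_sortVec_of_card_le (A : Finset (Fin S)) (hA : S ≤ ℓ + #A) (h : ∀ i ∈ A, c ≤ w i) :
    c ≤ sortVec w ℓ := by
  by_contra! hc
  have hmaps : Set.MapsTo (Tuple.sort w).symm A (Ioi ℓ) := fun i hi =>
    mem_Ioi.mpr <| (Tuple.monotone_sort w).reflect_lt <|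
      hc.trans_le ((h i hi).trans (sortVec_symm_sort_apply w i).ge)
  have := card_le_card_of_injOn _ hmaps (Tuple.sort w).symm.injective.injOn
  rw [Fin.card_Ioi] at this
  omega

lemma exists_le_sortVec_of_card_le (ℓ : Fin S) (A : Finset (Fin S)) (hA : S ≤ ℓ + #A) :
    ∃ j ∈ A, w j ≤ sortVec w ℓ := by
  have hne : A.Nonempty := card_pos.mp (by omega)
  obtain ⟨j, hjA, hjmin⟩ := A.exists_min_image w hne
  exact ⟨j, hjA, le_sortVec_of_card_le w A hA hjmin⟩

end sortVec

noncomputable def shiftPos {S : ℕ} (σ ξ : ℝ) (P : Fin S) (u : Fin S → ℝ) : Fin S → ℝ :=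
  fun i => max (u i + (if i = P then σ else 0) - ξ) 0

section shiftPos

variable {S : ℕ} {σ ξ : ℝ} {P : Fin S} {u v : Fin S → ℝ}

lemma GP_eq_sortVec_shiftPos : GP σ ξ P u = sortVec (shiftPos σ ξ P u) := rfl

lemma shiftPos_self : shiftPos σ ξ P u P = max (u P + σ - ξ) 0 := by
  simp [shiftPos]

lemma shiftPos_of_ne {i : Fin S} (h : i ≠ P) : shiftPos σ ξ P u i = max (u i - ξ) 0 := by
  simp [shiftPos, h]

lemma max_sub_le_shiftPos (hσ : 0 ≤ σ) (i : Fin S) : max (u i - ξ) 0 ≤ shiftPos σ ξ P u i := by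
  unfold shiftPos
  split_ifs <;> gcongr <;> linarith

lemma max_sub_le_sortVec_shiftPos (hσ : 0 ≤ σ) (hv : Monotone v) (ℓ : Fin S) :
    max (v ℓ - ξ) 0 ≤ sortVec (shiftPos σ ξ P v) ℓ := by
  refine le_sortVec_of_card_le _ (Ici ℓ) (by rw [Fin.card_Ici]; omega) fun i hi => ?_
  calc max (v ℓ - ξ) 0 ≤ max (v i - ξ) 0 := by gcongr; exact hv (mem_Ici.mp hi)
    _ ≤ shiftPos σ ξ P v i := max_sub_le_shiftPos hσ i

lemma exists_shiftPos_zero_le_shiftPos (hS : 0 < S) {ℓ j : Fin S} (hPℓ : P ≤ ℓ)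
    (hu : Monotone u) (huv : ∀ i, P ≤ i → u i ≤ v i) (hj : j ∈ insert P (Ioi ℓ)) :
    ∃ k ∉ Ioc ⟨0, hS⟩ ℓ, shiftPos σ ξ ⟨0, hS⟩ u k ≤ shiftPos σ ξ P v j := by
  rcases mem_insert.mp hj with rfl | hj
  · refine ⟨⟨0, hS⟩, by simp, ?_⟩
    rw [shiftPos_self, shiftPos_self]
    gcongr
    exact (hu (Nat.zero_le _)).trans (huv j le_rfl)
  · have hℓj := mem_Ioi.mp hj
    refine ⟨j, by simp [hℓj], ?_⟩
    have hzj : (⟨0, hS⟩ : Fin S) < j := lt_of_le_of_lt (Nat.zero_le ℓ) hℓj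
    rw [shiftPos_of_ne hzj.ne', shiftPos_of_ne (hPℓ.trans_lt hℓj).ne']
    gcongr
    exact huv j (hPℓ.trans hℓj.le)

end shiftPos

theorem G_le_GP_of_ge_general {S : ℕ} (hS : 0 < S) (P : Fin S) (σ ξ : ℝ)
    (hσ : 0 ≤ σ)
    (u v : Fin S → ℝ)
    (hu : Monotone u) (hv : Monotone v)
    (huv : precP P u v) :
    ∀ ℓ : Fin S, P ≤ ℓ → GP σ ξ ⟨0, hS⟩ u ℓ ≤ GP σ ξ P v ℓ := by
  intro ℓ hPℓ
  set z : Fin S := ⟨0, hS⟩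
  rw [GP_eq_sortVec_shiftPos, GP_eq_sortVec_shiftPos]
  obtain ⟨j, hj, hjc⟩ := exists_le_sortVec_of_card_le (shiftPos σ ξ P v) ℓ (insert P (Ioi ℓ))
    (by rw [card_insert_of_notMem (by simpa using hPℓ), Fin.card_Ioi]; omega)
  obtain ⟨k, hk, hkj⟩ := exists_shiftPos_zero_le_shiftPos hS hPℓ hu huv.2 hj
  refine sortVec_le_of_card_le _ (insert k (Ioc z ℓ))
    (by rw [card_insert_of_notMem hk, Fin.card_Ioc]; simp) fun i hi => ?_
  rcases mem_insert.mp hi with rfl | hi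
  · exact hkj.trans hjc
  · obtain ⟨hzi, hiℓ⟩ := mem_Ioc.mp hi
    calc shiftPos σ ξ z u i = max (u i - ξ) 0 := shiftPos_of_ne hzi.ne'
      _ ≤ max (v ℓ - ξ) 0 := by gcongr; exact (hu hiℓ).trans (huv.2 ℓ hPℓ)
      _ ≤ _ := max_sub_le_sortVec_shiftPos hσ hv ℓ

/-- if `u ≺_P v` then `G(u)(ℓ) ≤ G̃^P(v)(ℓ)` for every `ℓ ≥ P`. -/
theorem G_le_GP_of_ge {S : ℕ} (hS : 0 < S) (P : Fin S) (σ ξ : ℝ)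
    (hσ : 0 ≤ σ) (hξ : 0 ≤ ξ)
    (u v : Fin S → ℝ)
    (hu : Monotone u) (hv : Monotone v)
    (hu0 : ∀ i, 0 ≤ u i) (hv0 : ∀ i, 0 ≤ v i)
    (huv : precP P u v) :
    ∀ ℓ : Fin S, P ≤ ℓ → GP σ ξ ⟨0, hS⟩ u ℓ ≤ GP σ ξ P v ℓ :=
  G_le_GP_of_ge_general hS P σ ξ hσ u v hu hv huv
end
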